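/- arXiv:2107.10112 — 7 statements merged into one kernel-verified Lean document; each statement's English description precedes it below -/
import Mathlib

section
/- Let d ≥ 2 and let f : [0,1] → ℝ be a continuous convex function. For every ε ∈ [0,1] there exist density matrices ρ and σ of dimension d such that T(ρ,σ) = ε and |S_f(ρ) − S_f(σ)| = Δ_{f;d}(ε); in other words, the bound Δ_{f;d}(ε) on |S_f(ρ)−S_f(σ)| is exact for each ε ∈ [0,1]. -/
/-!
The extremal pair is `ρ = diag(1, 0, …, 0)` and `σ = diag(1 - ε, t, …, t)` with
`t = ε / (d - 1)`. Being diagonal, `ρ`, `σ` and `ρ - σ` have their diagonals as spectra, so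
`T(ρ, σ) = ε` and `S_f(ρ) - S_f(σ) = -Δ_{f;d}(ε)`. Finally `Δ_{f;d}(ε) ≥ 0` because, by
convexity, the chord of `f` over `[0, 1]` gives
`(d - 1)(f t - f 0) ≤ ε (f 1 - f 0) ≤ f 1 - f (1 - ε)`.
-/

open Matrix BigOperators ComplexOrder

namespace Matrix.IsHermitian

variable {𝕜 n : Type*} [RCLike 𝕜] [Fintype n] [DecidableEq n] {A : Matrix n n 𝕜}

lemma eigenvalues_multiset_eq_of_eq_diagonal (hA : A.IsHermitian) {μ : n → ℝ}
    (h : A = diagonal fun i => (μ i : 𝕜)) :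
    Finset.univ.val.map hA.eigenvalues = Finset.univ.val.map μ := by
  have hdiag : A.charpoly.roots = Finset.univ.val.map (RCLike.ofReal ∘ μ) := by
    rw [h, charpoly_diagonal, Polynomial.roots_prod _ _ (Finset.prod_ne_zero_iff.mpr
      fun i _ => Polynomial.X_sub_C_ne_zero _)]
    simp
  rw [hA.roots_charpoly_eq_eigenvalues, ← Multiset.map_map, ← Multiset.map_map] at hdiag
  exact Multiset.map_injective RCLike.ofReal_injective hdiag

lemma sum_comp_eigenvalues_of_eq_diagonal (hA : A.IsHermitian) {μ : n → ℝ}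
    (h : A = diagonal fun i => (μ i : 𝕜)) (g : ℝ → ℝ) :
    ∑ i, g (hA.eigenvalues i) = ∑ i, g (μ i) := by
  have := congrArg (fun s => (s.map g).sum) (hA.eigenvalues_multiset_eq_of_eq_diagonal h)
  simp only [Multiset.map_map] at this
  exact this

end Matrix.IsHermitian

lemma Matrix.posSemidef_diagonal_ofReal {𝕜 n : Type*} [RCLike 𝕜] [Fintype n] [DecidableEq n]
    {μ : n → ℝ} (hμ : ∀ i, 0 ≤ μ i) : (diagonal fun i => (μ i : 𝕜)).PosSemidef :=
  posSemidef_diagonal_iff.mpr fun i => RCLike.ofReal_nonneg.mpr (hμ i)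

def consConst (d : ℕ) [NeZero d] (a b : ℝ) : Fin d → ℝ := fun i => if i = 0 then a else b

section consConst
variable {d : ℕ} [NeZero d]

lemma sum_comp_consConst (g : ℝ → ℝ) (a b : ℝ) :
    ∑ i, g (consConst d a b i) = g a + ((d : ℝ) - 1) * g b := by
  rw [← Finset.add_sum_erase _ _ (Finset.mem_univ 0)]
  simp only [consConst, if_true]
  rw [Finset.sum_congr rfl fun i hi => by rw [if_neg (Finset.ne_of_mem_erase hi)],
    Finset.sum_const, Finset.card_erase_of_mem (Finset.mem_univ _), Finset.card_univ,
    Fintype.card_fin, nsmul_eq_mul, Nat.cast_sub NeZero.one_le, Nat.cast_one]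

lemma sum_consConst (a b : ℝ) : ∑ i, consConst d a b i = a + ((d : ℝ) - 1) * b :=
  sum_comp_consConst id a b

lemma consConst_nonneg {a b : ℝ} (ha : 0 ≤ a) (hb : 0 ≤ b) (i : Fin d) :
    0 ≤ consConst d a b i := by
  unfold consConst; split_ifs <;> assumption

lemma consConst_sub_consConst (a b a' b' : ℝ) :
    consConst d a b - consConst d a' b' = consConst d (a - a') (b - b') := by
  ext i; unfold consConst; split_ifs <;> simp [*]

end consConst

lemma ConvexOn.apply_le_of_mem_Icc_zero_one {f : ℝ → ℝ} (hf : ConvexOn ℝ (Set.Icc 0 1) f)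
    {s : ℝ} (hs : s ∈ Set.Icc (0 : ℝ) 1) : f s ≤ (1 - s) * f 0 + s * f 1 := by
  simpa using hf.2 (Set.left_mem_Icc.mpr zero_le_one)
    (Set.right_mem_Icc.mpr zero_le_one)
    (sub_nonneg.mpr hs.2) hs.1 (sub_add_cancel 1 s)

lemma ConvexOn.mul_sub_le_sub {f : ℝ → ℝ} (hf : ConvexOn ℝ (Set.Icc 0 1) f) {m ε : ℝ}
    (hm : 0 < m) (hε : ε ∈ Set.Icc (0 : ℝ) 1) (hεm : ε ≤ m) :
    m * (f (ε / m) - f 0) ≤ f 1 - f (1 - ε) := by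
  have h₁ := hf.apply_le_of_mem_Icc_zero_one
    ⟨div_nonneg hε.1 hm.le, (div_le_one hm).mpr hεm⟩
  have h₂ := hf.apply_le_of_mem_Icc_zero_one ⟨sub_nonneg.mpr hε.2, sub_le_self 1 hε.1⟩
  calc m * (f (ε / m) - f 0) ≤ m * (ε / m * (f 1 - f 0)) := by gcongr; linarith
    _ = ε * (f 1 - f 0) := by field_simp
    _ ≤ f 1 - f (1 - ε) := by linarith

theorem fEntropy_bound_exact_general (d : ℕ) (hd : 2 ≤ d) (f : ℝ → ℝ)
    (hf_conv : ConvexOn ℝ (Set.Icc 0 1) f)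
    (ε : ℝ) (hε : ε ∈ Set.Icc (0 : ℝ) 1) :
    ∃ (ρ σ : Matrix (Fin d) (Fin d) ℂ) (hρ : ρ.PosSemidef) (hσ : σ.PosSemidef),
      ρ.trace = 1 ∧ σ.trace = 1 ∧
      (1/2) * ∑ i, |(hρ.isHermitian.sub hσ.isHermitian).eigenvalues i| = ε ∧
      |(-∑ i, f (hρ.isHermitian.eigenvalues i)) - (-∑ i, f (hσ.isHermitian.eigenvalues i))| =
        f 1 - f (1 - ε) - ((d : ℝ) - 1) * (f (ε / ((d : ℝ) - 1)) - f 0) := by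
  have : NeZero d := ⟨by omega⟩
  have hm : (1 : ℝ) ≤ d - 1 := by
    have : (2 : ℝ) ≤ d := by exact_mod_cast hd
    linarith
  set t := ε / ((d : ℝ) - 1)
  have ht : 0 ≤ t := div_nonneg hε.1 (by linarith)
  have hεt : ((d : ℝ) - 1) * t = ε := mul_div_cancel₀ ε (by linarith)
  have hp : (diagonal fun i => (consConst d 1 0 i : ℂ)).PosSemidef :=
    posSemidef_diagonal_ofReal (consConst_nonneg zero_le_one le_rfl)
  have hq : (diagonal fun i => (consConst d (1 - ε) t i : ℂ)).PosSemidef :=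
    posSemidef_diagonal_ofReal (consConst_nonneg (sub_nonneg.mpr hε.2) ht)
  have hpq : (diagonal fun i => (consConst d 1 0 i : ℂ)) -
      diagonal (fun i => (consConst d (1 - ε) t i : ℂ)) =
      diagonal fun i => (consConst d ε (-t) i : ℂ) := by
    rw [diagonal_sub]
    congr 1
    funext i
    rw [← Complex.ofReal_sub, ← Pi.sub_apply, consConst_sub_consConst, sub_sub_cancel, zero_sub]
  refine ⟨_, _, hp, hq, ?_, ?_, ?_, ?_⟩
  · simp [trace_diagonal, ← Complex.ofReal_sum, sum_consConst]
  · simp [trace_diagonal, ← Complex.ofReal_sum, sum_consConst, hεt]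
  · rw [(hp.isHermitian.sub hq.isHermitian).sum_comp_eigenvalues_of_eq_diagonal
      (μ := consConst d ε (-t)) hpq, sum_comp_consConst (fun x => |x|), abs_neg,
      abs_of_nonneg hε.1, abs_of_nonneg ht, hεt]
    ring
  · rw [hp.isHermitian.sum_comp_eigenvalues_of_eq_diagonal (μ := consConst d 1 0) rfl,
      hq.isHermitian.sum_comp_eigenvalues_of_eq_diagonal (μ := consConst d (1 - ε) t) rfl,
      sum_comp_consConst f, sum_comp_consConst f, abs_of_nonpos]
    · ring
    · linarith [hf_conv.mul_sub_le_sub (m := (d : ℝ) - 1) (by linarith) hε (hε.2.trans hm)]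

theorem fEntropy_bound_exact (d : ℕ) (hd : 2 ≤ d) (f : ℝ → ℝ)
    (hf_cont : ContinuousOn f (Set.Icc 0 1))
    (hf_conv : ConvexOn ℝ (Set.Icc 0 1) f)
    (ε : ℝ) (hε : ε ∈ Set.Icc (0 : ℝ) 1) :
    ∃ (ρ σ : Matrix (Fin d) (Fin d) ℂ) (hρ : ρ.PosSemidef) (hσ : σ.PosSemidef),
      ρ.trace = 1 ∧ σ.trace = 1 ∧
      (1/2) * ∑ i, |(hρ.isHermitian.sub hσ.isHermitian).eigenvalues i| = ε ∧
      |(-∑ i, f (hρ.isHermitian.eigenvalues i)) - (-∑ i, f (hσ.isHermitian.eigenvalues i))| =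
        f 1 - f (1 - ε) - ((d : ℝ) - 1) * (f (ε / ((d : ℝ) - 1)) - f 0) :=
  fEntropy_bound_exact_general d hd f hf_conv ε hε
end

section
/- Let d ≥ 2, let t ≥ 0, and let ρ and σ be positive-semidefinite Hermitian d×d complex matrices with tr ρ = tr σ = t. Let f : [0,t] → ℝ be a continuous convex function, and let ε := T(ρ,σ) := (1/2)·Σ_{i=1}^d |λ_i(ρ−σ)|. Then |S_f(ρ) − S_f(σ)| ≤ Δ_{t;f;d}(ε) := f(t) − f(t−ε) − (d−1)·(f(ε/(d−1)) − f(0)). -/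
/-!
Let `r`, `s`, `a` be the spectra of `ρ`, `σ`, `ρ - σ`, so that `ε = ∑ aᵢ⁺`, and `Δ = fDelta t f d`.

Classical case: for nonnegative vectors `p`, `q` with sum `t` and `δ = ∑ (pᵢ - qᵢ)⁺`, convexity
gives `∑ f pᵢ - ∑ f qᵢ ≤ Δ(δ)`. The coordinates where `p > q` gain at most `f t - f (t - δ)`
(increments of a convex function grow when moved to the right, and these increments fit side by
side below `t`); the at most `d - 1` remaining coordinates lose at least
`(d - 1) (f (δ / (d - 1)) - f 0)` by Jensen. Moreover `Δ` increases on `[0, t (d - 1) / d]` and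
decreases on `[t (d - 1) / d, t]`.

Quantum case: the diagonal of a Hermitian matrix in any orthonormal basis is the image of its
spectrum under the doubly stochastic matrix `|uᵢⱼ|²` of the change of basis. In the eigenbasis of
`ρ` this gives `q = P s` with `∑ f q ≤ ∑ f s` (Jensen) and `∑ (r - q)⁺ ≤ ε`; in the eigenbasis of
`ρ - σ`, Ky Fan's maximum principle gives a permutation `q'` of `s` with `∑ (r - q')⁺ ≥ ε`. The
classical bound for `(r, q)` below the turning point of `Δ`, or for `(r, q')` above it, bounds
`∑ f r - ∑ f s` by `Δ(ε)`; exchanging `ρ` and `σ` gives the other sign.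
-/

open Matrix BigOperators ComplexOrder

open Finset

namespace ConvexOn

variable {s : Set ℝ} {f : ℝ → ℝ}

theorem slope_le_slope (hf : ConvexOn ℝ s f) {a b c e : ℝ} (ha : a ∈ s) (he : e ∈ s)
    (hab : a < b) (hce : c < e) (hac : a ≤ c) (hbe : b ≤ e) :
    (f b - f a) / (b - a) ≤ (f e - f c) / (e - c) := by
  have hmem : ∀ x ∈ Set.Icc a e, x ∈ s := fun x hx => hf.1.ordConnected.out ha he hx
  have hae : a < e := hab.trans_le hbe
  have swap : ∀ x y : ℝ, (f x - f y) / (x - y) = (f y - f x) / (y - x) := fun x y => by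
    rw [← neg_div_neg_eq, neg_sub, neg_sub]
  calc (f b - f a) / (b - a) ≤ (f e - f a) / (e - a) :=
        hf.secant_mono ha (hmem b ⟨hab.le, hbe⟩) he hab.ne' hae.ne' hbe
    _ = (f a - f e) / (a - e) := swap e a
    _ ≤ (f c - f e) / (c - e) :=
        hf.secant_mono he ha (hmem c ⟨hac, hce.le⟩) hae.ne hce.ne hac
    _ = (f e - f c) / (e - c) := swap c e

theorem map_add_sub_le_map_add_sub (hf : ConvexOn ℝ s f) {x y δ : ℝ} (hx : x ∈ s)
    (hyδ : y + δ ∈ s) (hxy : x ≤ y) (hδ : 0 ≤ δ) :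
    f (x + δ) - f x ≤ f (y + δ) - f y := by
  rcases hδ.eq_or_lt with rfl | hδ
  · simp
  rcases hxy.eq_or_lt with rfl | hxy
  · rfl
  have h := hf.slope_le_slope hx hyδ (lt_add_of_pos_right x hδ) (lt_add_of_pos_right y hδ)
    hxy.le (by linarith)
  rwa [add_sub_cancel_left, add_sub_cancel_left, div_le_div_iff_of_pos_right hδ] at h

theorem sum_map_add_sub_le {ι : Type*} [DecidableEq ι] (hf : ConvexOn ℝ s f) {t : ℝ}
    (ht : t ∈ s) (F : Finset ι) {x h : ι → ℝ} (hx : ∀ i ∈ F, x i ∈ s)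
    (hh : ∀ i ∈ F, 0 ≤ h i) (hxt : ∀ i ∈ F, x i + ∑ j ∈ F, h j ≤ t) :
    ∑ i ∈ F, (f (x i + h i) - f (x i)) ≤ f t - f (t - ∑ i ∈ F, h i) := by
  induction F using Finset.induction_on with
  | empty => simp
  | @insert a F ha ih =>
    simp only [Finset.sum_insert ha, Finset.mem_insert, forall_eq_or_imp] at hx hh hxt ⊢
    have hF : 0 ≤ ∑ j ∈ F, h j := Finset.sum_nonneg hh.2
    have hstep : f (x a + h a) - f (x a) ≤
        f (t - ∑ j ∈ F, h j - h a + h a) - f (t - ∑ j ∈ F, h j - h a) :=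
      hf.map_add_sub_le_map_add_sub hx.1
        (hf.1.ordConnected.out hx.1 ht ⟨by linarith, by linarith⟩) (by linarith) hh.1
    have hrest := ih hx.2 hh.2 fun i hi => by linarith [hxt.2 i hi]
    rw [sub_add_cancel] at hstep
    rw [show t - (h a + ∑ j ∈ F, h j) = t - ∑ j ∈ F, h j - h a by ring]
    linarith

theorem mul_map_div_sub_le_sum {ι : Type*} (hf : ConvexOn ℝ s f) (h0 : 0 ∈ s) {F : Finset ι}
    {y : ι → ℝ} (hy : ∀ i ∈ F, y i ∈ s) {n : ℝ} (hn : (#F : ℝ) ≤ n) :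
    n * (f ((∑ i ∈ F, y i) / n) - f 0) ≤ ∑ i ∈ F, (f (y i) - f 0) := by
  rcases (le_trans (Nat.cast_nonneg _) hn).eq_or_lt with rfl | hn0
  · have : F = ∅ := Finset.card_eq_zero.mp (by exact_mod_cast hn.antisymm (Nat.cast_nonneg _))
    simp [this]
  have h := hf.map_add_sum_le (w := fun _ => n⁻¹) (v := 1 - #F / n) (q := 0)
    (fun _ _ => inv_nonneg.mpr hn0.le)
    (by simp only [Finset.sum_const, nsmul_eq_mul, div_eq_mul_inv]; ring) hy
    (by rw [sub_nonneg, div_le_one hn0]; exact hn) h0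
  simp only [smul_eq_mul, mul_zero, zero_add, ← Finset.mul_sum] at h
  rw [Finset.sum_sub_distrib, Finset.sum_const, nsmul_eq_mul, div_eq_inv_mul]
  have := mul_le_mul_of_nonneg_left h hn0.le
  field_simp at this ⊢
  linarith

theorem sum_map_sub_map_le_of_le {ι : Type*} (hf : ConvexOn ℝ s f) (h0 : 0 ∈ s)
    {F : Finset ι} {p q : ι → ℝ} (hp : ∀ i ∈ F, 0 ≤ p i) (hpq : ∀ i ∈ F, p i ≤ q i)
    (hq : ∀ i ∈ F, q i ∈ s) {n : ℝ} (hn : (#F : ℝ) ≤ n) :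
    ∑ i ∈ F, (f (p i) - f (q i)) ≤ -(n * (f ((∑ i ∈ F, (q i - p i)) / n) - f 0)) := by
  have hmem : ∀ i ∈ F, q i - p i ∈ s := fun i hi =>
    hf.1.ordConnected.out h0 (hq i hi) ⟨sub_nonneg.mpr (hpq i hi), by linarith [hp i hi]⟩
  calc ∑ i ∈ F, (f (p i) - f (q i)) ≤ ∑ i ∈ F, -(f (q i - p i) - f 0) :=
        Finset.sum_le_sum fun i hi => by
          have := hf.map_add_sub_le_map_add_sub h0 (y := p i) (δ := q i - p i)
            (by rw [add_sub_cancel]; exact hq i hi) (hp i hi) (sub_nonneg.mpr (hpq i hi))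
          simp only [zero_add, add_sub_cancel] at this
          linarith
    _ ≤ _ := by
        rw [Finset.sum_neg_distrib]
        exact neg_le_neg (hf.mul_map_div_sub_le_sum h0 hmem hn)

end ConvexOn

noncomputable def fDelta (t : ℝ) (f : ℝ → ℝ) (d : ℕ) (ε : ℝ) : ℝ :=
  f t - f (t - ε) - ((d : ℝ) - 1) * (f (ε / ((d : ℝ) - 1)) - f 0)

section fDelta

variable {t : ℝ} {f : ℝ → ℝ} {d : ℕ}

theorem fDelta_sub_fDelta (x y : ℝ) : fDelta t f d y - fDelta t f d x =
    (f (t - x) - f (t - y)) -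
      ((d : ℝ) - 1) * (f (y / ((d : ℝ) - 1)) - f (x / ((d : ℝ) - 1))) := by
  unfold fDelta
  ring

theorem add_div_sub_one_sub_eq {d y t : ℝ} (hd : 1 < d) :
    y + y / (d - 1) - t = d / (d - 1) * (y - t * (d - 1) / d) := by
  have h1 : d - 1 ≠ 0 := by linarith
  have h2 : d ≠ 0 := by linarith
  field_simp
  ring

theorem fDelta_monotoneOn (hf : ConvexOn ℝ (Set.Icc 0 t) f) (hd : 2 ≤ d) :
    MonotoneOn (fDelta t f d) (Set.Icc 0 (t * ((d : ℝ) - 1) / d)) := by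
  intro x ⟨hx0, _⟩ y ⟨_, hyc⟩ hxy
  rcases hxy.eq_or_lt with rfl | hxy
  · rfl
  have hd' : (2 : ℝ) ≤ d := by exact_mod_cast hd
  set n : ℝ := (d : ℝ) - 1
  have hn : 0 < n := by linarith
  have hyt : y + y / n ≤ t := by
    have := add_div_sub_one_sub_eq (y := y) (t := t) (by linarith : (1 : ℝ) < d)
    nlinarith [div_pos (by linarith : (0 : ℝ) < d) hn]
  have hxn : x / n < y / n := div_lt_div_of_pos_right hxy hn
  have hx0' : 0 ≤ x / n := div_nonneg hx0 hn.le
  have h := hf.slope_le_slope (a := x / n) (b := y / n) (c := t - y) (e := t - x)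
    ⟨hx0', by linarith⟩ ⟨by linarith, by linarith⟩ hxn (by linarith) (by linarith) (by linarith)
  rw [← sub_div, sub_sub_sub_cancel_left, div_div_eq_mul_div,
    div_le_div_iff_of_pos_right (by linarith)] at h
  rw [← sub_nonneg, fDelta_sub_fDelta]
  linarith

theorem fDelta_antitoneOn (hf : ConvexOn ℝ (Set.Icc 0 t) f) (hd : 2 ≤ d) :
    AntitoneOn (fDelta t f d) (Set.Icc (t * ((d : ℝ) - 1) / d) t) := by
  intro x ⟨hxc, _⟩ y ⟨_, hyt⟩ hxy
  rcases hxy.eq_or_lt with rfl | hxy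
  · rfl
  have hd' : (2 : ℝ) ≤ d := by exact_mod_cast hd
  set n : ℝ := (d : ℝ) - 1
  have hn : 1 ≤ n := by linarith
  have hxt : t ≤ x + x / n := by
    have := add_div_sub_one_sub_eq (y := x) (t := t) (by linarith : (1 : ℝ) < d)
    nlinarith [div_pos (by linarith : (0 : ℝ) < d) (by linarith : 0 < n)]
  have hx0 : 0 ≤ x := by
    by_contra! hx
    linarith [div_neg_of_neg_of_pos hx (by linarith : 0 < n)]
  have hxn : x / n < y / n := div_lt_div_of_pos_right hxy (by linarith)
  have hyn : y / n ≤ y := div_le_self (by linarith) hn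
  have h := hf.slope_le_slope (a := t - y) (b := t - x) (c := x / n) (e := y / n)
    ⟨by linarith, by linarith⟩ ⟨div_nonneg (by linarith) (by linarith), by linarith⟩
    (by linarith) hxn (by linarith) (by linarith)
  rw [← sub_div, sub_sub_sub_cancel_left, div_div_eq_mul_div,
    div_le_div_iff_of_pos_right (by linarith)] at h
  rw [← sub_nonpos, fDelta_sub_fDelta]
  linarith

end fDelta

theorem sum_max_zero_eq_sum_filter {ι : Type*} [Fintype ι] (x : ι → ℝ) :
    ∑ i, max (x i) 0 = ∑ i with 0 < x i, x i := by
  rw [Finset.sum_filter]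
  exact Finset.sum_congr rfl fun i _ => by
    split_ifs with h
    · exact max_eq_left h.le
    · exact max_eq_right (not_lt.mp h)

theorem half_mul_sum_abs_eq_sum_max_zero {ι : Type*} [Fintype ι] {x : ι → ℝ}
    (hx : ∑ i, x i = 0) : 1 / 2 * ∑ i, |x i| = ∑ i, max (x i) 0 := by
  have h : ∀ i, |x i| = 2 * max (x i) 0 - x i := fun i => by
    rcases le_total (x i) 0 with hi | hi
    · rw [abs_of_nonpos hi, max_eq_right hi]; ring
    · rw [abs_of_nonneg hi, max_eq_left hi]; ring
  simp only [h, Finset.sum_sub_distrib, ← Finset.mul_sum, hx]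
  ring

theorem sum_filter_not_lt_sub_eq {ι : Type*} [Fintype ι] {p q : ι → ℝ}
    (hpq : ∑ i, p i = ∑ i, q i) :
    ∑ i with ¬q i < p i, (q i - p i) = ∑ i with q i < p i, (p i - q i) := by
  have := Finset.sum_filter_add_sum_filter_not univ (fun i => q i < p i) fun i => p i - q i
  simp only [Finset.sum_sub_distrib, hpq, sub_self] at this ⊢
  linarith

theorem ConvexOn.sum_filter_lt_map_sub_map_le {ι : Type*} [Fintype ι] {t : ℝ} {f : ℝ → ℝ}
    (hf : ConvexOn ℝ (Set.Icc 0 t) f) {p q : ι → ℝ} (hp : ∀ i, 0 ≤ p i) (hq : ∀ i, 0 ≤ q i)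
    (hpq : ∑ i, p i = ∑ i, q i) (hqt : ∑ i, q i = t) :
    ∑ i with q i < p i, (f (p i) - f (q i)) ≤ f t - f (t - ∑ i with q i < p i, (p i - q i)) := by
  classical
  have hqt' : ∀ i, q i ≤ t := fun i => hqt ▸ Finset.single_le_sum (fun j _ => hq j) (mem_univ i)
  have hroom : ∀ i ∈ ({i | q i < p i} : Finset ι),
      q i + ∑ j with q j < p j, (p j - q j) ≤ t := fun i hi => by
    have h1 : q i ≤ ∑ j with q j < p j, q j := Finset.single_le_sum (fun j _ => hq j) hi
    have h2 : ∑ j with ¬q j < p j, (q j - p j) ≤ ∑ j with ¬q j < p j, q j :=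
      Finset.sum_le_sum fun j _ => by linarith [hp j]
    linarith [Finset.sum_filter_add_sum_filter_not univ (fun j => q j < p j) q,
      sum_filter_not_lt_sub_eq hpq]
  have := hf.sum_map_add_sub_le ⟨hqt ▸ Finset.sum_nonneg fun i _ => hq i, le_rfl⟩ _ (x := q)
    (h := fun i => p i - q i) (fun i _ => ⟨hq i, hqt' i⟩)
    (fun i hi => sub_nonneg.mpr (Finset.mem_filter.mp hi).2.le) hroom
  simpa only [add_sub_cancel] using this

theorem sum_map_sub_sum_map_le_fDelta {ι : Type*} [Fintype ι] {t : ℝ} {f : ℝ → ℝ}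
    (hf : ConvexOn ℝ (Set.Icc 0 t) f) {p q : ι → ℝ} (hp : ∀ i, 0 ≤ p i) (hq : ∀ i, 0 ≤ q i)
    (hpt : ∑ i, p i = t) (hqt : ∑ i, q i = t) :
    ∑ i, f (p i) - ∑ i, f (q i) ≤ fDelta t f (Fintype.card ι) (∑ i, max (p i - q i) 0) := by
  have hpq := hpt.trans hqt.symm
  have hδ : ∑ i, max (p i - q i) 0 = ∑ i with q i < p i, (p i - q i) := by
    simp only [sum_max_zero_eq_sum_filter, sub_pos]
  rcases (univ.filter fun i => q i < p i).eq_empty_or_nonempty with hU | hU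
  · have hle : ∀ i, p i ≤ q i := fun i => not_lt.mp fun h =>
      (Finset.eq_empty_iff_forall_notMem.mp hU) i (Finset.mem_filter.mpr ⟨mem_univ i, h⟩)
    obtain rfl : p = q := funext fun i =>
      (Finset.sum_eq_sum_iff_of_le fun i _ => hle i).mp hpq i (mem_univ i)
    simp [fDelta]
  have ht : 0 ≤ t := hpt ▸ Finset.sum_nonneg fun i _ => hp i
  have hcard : (#(univ.filter fun i => ¬q i < p i) : ℝ) ≤ Fintype.card ι - 1 := by
    have := Finset.card_filter_add_card_filter_not (s := univ) fun i => q i < p i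
    have := hU.card_pos
    rw [le_sub_iff_add_le, ← Finset.card_univ]
    exact_mod_cast (by omega)
  have hgain := hf.sum_filter_lt_map_sub_map_le hp hq hpq hqt
  have hloss := hf.sum_map_sub_map_le_of_le ⟨le_rfl, ht⟩ (fun i _ => hp i)
    (fun i hi => not_lt.mp (Finset.mem_filter.mp hi).2)
    (fun i _ => ⟨hq i, hqt ▸ Finset.single_le_sum (fun j _ => hq j) (mem_univ i)⟩) hcard
  rw [sum_filter_not_lt_sub_eq hpq] at hloss
  rw [hδ, ← Finset.sum_sub_distrib,
    ← Finset.sum_filter_add_sum_filter_not univ fun i => q i < p i]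
  unfold fDelta
  linarith

section DoublyStochastic

variable {n : Type*} [Fintype n] [DecidableEq n]

theorem ConvexOn.sum_map_mulVec_le {s : Set ℝ} {φ : ℝ → ℝ} (hφ : ConvexOn ℝ s φ)
    {P : Matrix n n ℝ} (hP : P ∈ doublyStochastic ℝ n) {x : n → ℝ} (hx : ∀ i, x i ∈ s) :
    ∑ i, φ ((P *ᵥ x) i) ≤ ∑ i, φ (x i) := by
  rw [mem_doublyStochastic_iff_sum] at hP
  calc ∑ i, φ ((P *ᵥ x) i) ≤ ∑ i, ∑ j, P i j * φ (x j) := Finset.sum_le_sum fun i _ => by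
        simpa [mulVec, dotProduct] using
          hφ.map_sum_le (t := univ) (w := P i) (p := x) (fun j _ => hP.1 i j) (hP.2.1 i)
            fun j _ => hx j
    _ = ∑ j, φ (x j) := by
        rw [Finset.sum_comm]
        simp only [← Finset.sum_mul, hP.2.2, one_mul]

theorem exists_card_eq_threshold (x : n → ℝ) {k : ℕ} (hk : k ≤ Fintype.card n) :
    ∃ T : Finset n, #T = k ∧ ∃ b, (∀ i ∈ T, b ≤ x i) ∧ ∀ i ∉ T, x i ≤ b := by
  induction k with
  | zero => exact ⟨∅, rfl, ∑ i, |x i|, by simp, fun i _ => (le_abs_self _).trans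
      (Finset.single_le_sum (fun j _ => abs_nonneg (x j)) (mem_univ i))⟩
  | succ k ih =>
    obtain ⟨T, hT, b, hbT, hbTc⟩ := ih (by omega)
    obtain ⟨m, hm, hmax⟩ := Finset.exists_max_image Tᶜ x
      (Finset.card_pos.mp (by rw [Finset.card_compl]; omega))
    have hmT : m ∉ T := Finset.mem_compl.mp hm
    refine ⟨insert m T, by rw [Finset.card_insert_of_notMem hmT, hT], x m, ?_, ?_⟩
    · simp only [Finset.mem_insert, forall_eq_or_imp]
      exact ⟨le_rfl, fun i hi => (hbTc m hmT).trans (hbT i hi)⟩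
    · intro i hi
      exact hmax i (Finset.mem_compl.mpr fun h => hi (Finset.mem_insert_of_mem h))

theorem sum_mul_le_sum_of_threshold {x c : n → ℝ} (hc0 : ∀ i, 0 ≤ c i) (hc1 : ∀ i, c i ≤ 1)
    {T : Finset n} (hcT : ∑ i, c i = #T) {b : ℝ} (hbT : ∀ i ∈ T, b ≤ x i)
    (hbTc : ∀ i ∉ T, x i ≤ b) :
    ∑ i, c i * x i ≤ ∑ i ∈ T, x i := by
  have hterm : ∀ i, 0 ≤ ((if i ∈ T then 1 else 0) - c i) * (x i - b) := fun i => by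
    split_ifs with hi
    · exact mul_nonneg (sub_nonneg.mpr (hc1 i)) (sub_nonneg.mpr (hbT i hi))
    · exact mul_nonneg_of_nonpos_of_nonpos (by linarith [hc0 i]) (sub_nonpos.mpr (hbTc i hi))
  have hsum : ∑ i, ((if i ∈ T then 1 else 0) - c i) * (x i - b) =
      ∑ i ∈ T, x i - ∑ i, c i * x i := by
    simp only [sub_mul, mul_sub, ite_mul, one_mul, zero_mul, Finset.sum_sub_distrib,
      Finset.sum_ite_mem, Finset.univ_inter, ← Finset.sum_mul, hcT, Finset.sum_const,
      nsmul_eq_mul]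
    ring
  linarith [Finset.sum_nonneg (s := univ) fun i _ => hterm i]

theorem exists_card_eq_sum_mulVec_le {P : Matrix n n ℝ} (hP : P ∈ doublyStochastic ℝ n)
    (x : n → ℝ) (S : Finset n) :
    ∃ T : Finset n, #T = #S ∧ ∑ i ∈ S, (P *ᵥ x) i ≤ ∑ i ∈ T, x i := by
  rw [mem_doublyStochastic_iff_sum] at hP
  obtain ⟨T, hT, b, hbT, hbTc⟩ := exists_card_eq_threshold x (Finset.card_le_univ S)
  refine ⟨T, hT, ?_⟩
  have hc1 : ∀ j, ∑ i ∈ S, P i j ≤ 1 := fun j => (hP.2.2 j) ▸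
    Finset.sum_le_sum_of_subset_of_nonneg (Finset.subset_univ S) fun i _ _ => hP.1 i j
  have hcT : ∑ j, ∑ i ∈ S, P i j = #T := by
    rw [Finset.sum_comm, hT, Finset.card_eq_sum_ones, Nat.cast_sum]
    exact Finset.sum_congr rfl fun i _ => by rw [hP.2.1 i, Nat.cast_one]
  calc ∑ i ∈ S, (P *ᵥ x) i = ∑ j, (∑ i ∈ S, P i j) * x j := by
        simp only [mulVec, dotProduct, Finset.sum_mul]
        exact Finset.sum_comm
    _ ≤ ∑ i ∈ T, x i := sum_mul_le_sum_of_threshold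
        (fun j => Finset.sum_nonneg fun i _ => hP.1 i j) hc1 hcT hbT hbTc

theorem exists_card_eq_sum_le_sum_mulVec {P : Matrix n n ℝ} (hP : P ∈ doublyStochastic ℝ n)
    (x : n → ℝ) (S : Finset n) :
    ∃ B : Finset n, #B = #S ∧ ∑ i ∈ B, x i ≤ ∑ i ∈ S, (P *ᵥ x) i := by
  obtain ⟨B, hB, h⟩ := exists_card_eq_sum_mulVec_le hP (-x) S
  refine ⟨B, hB, ?_⟩
  simpa only [mulVec_neg, Pi.neg_apply, Finset.sum_neg_distrib, neg_le_neg_iff] using h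

theorem exists_perm_sum_sub_sum_le (x y : n → ℝ) {T B : Finset n} (h : #T = #B) :
    ∃ π : Equiv.Perm n, ∑ i ∈ T, x i - ∑ i ∈ B, y i ≤ ∑ i, max (x i - y (π i)) 0 := by
  let e : T ≃ B := Finset.equivOfCardEq h
  refine ⟨e.extendSubtype, ?_⟩
  have hy : ∑ i ∈ T, y (e.extendSubtype i) = ∑ i ∈ B, y i := by
    rw [← Finset.sum_coe_sort T, ← Finset.sum_coe_sort B, ← e.sum_comp]
    exact Finset.sum_congr rfl fun i _ => by rw [e.extendSubtype_apply_of_mem i i.2]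
  calc ∑ i ∈ T, x i - ∑ i ∈ B, y i = ∑ i ∈ T, (x i - y (e.extendSubtype i)) := by
        rw [Finset.sum_sub_distrib, hy]
    _ ≤ ∑ i ∈ T, max (x i - y (e.extendSubtype i)) 0 :=
        Finset.sum_le_sum fun i _ => le_max_left _ _
    _ ≤ _ := Finset.sum_le_sum_of_subset_of_nonneg (Finset.subset_univ T)
        fun i _ _ => le_max_right _ _

theorem exists_mem_doublyStochastic_sum_sub_le {P Q : Matrix n n ℝ}
    (hP : P ∈ doublyStochastic ℝ n) (hQ : Q ∈ doublyStochastic ℝ n) (x y : n → ℝ)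
    (S : Finset n) :
    ∃ R ∈ doublyStochastic ℝ n,
      ∑ i ∈ S, ((P *ᵥ x) i - (Q *ᵥ y) i) ≤ ∑ i, max (x i - (R *ᵥ y) i) 0 := by
  obtain ⟨T, hT, hxT⟩ := exists_card_eq_sum_mulVec_le hP x S
  obtain ⟨B, hB, hyB⟩ := exists_card_eq_sum_le_sum_mulVec hQ y S
  obtain ⟨π, hπ⟩ := exists_perm_sum_sub_sum_le x y (hT.trans hB.symm)
  refine ⟨π.permMatrix ℝ, permMatrix_mem_doublyStochastic, ?_⟩
  rw [permMatrix_mulVec, Finset.sum_sub_distrib]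
  exact (sub_le_sub hxT hyB).trans hπ

theorem sum_map_sub_sum_map_le_fDelta_of_mem_doublyStochastic {t : ℝ} {f : ℝ → ℝ}
    (hd : 2 ≤ Fintype.card n) (hf : ConvexOn ℝ (Set.Icc 0 t) f) {r s : n → ℝ}
    (hr : ∀ i, 0 ≤ r i) (hs : ∀ i, 0 ≤ s i) (hrt : ∑ i, r i = t) (hst : ∑ i, s i = t)
    {ε : ℝ} {P R : Matrix n n ℝ} (hP : P ∈ doublyStochastic ℝ n) (hR : R ∈ doublyStochastic ℝ n)
    (hPε : ∑ i, max (r i - (P *ᵥ s) i) 0 ≤ ε) (hRε : ε ≤ ∑ i, max (r i - (R *ᵥ s) i) 0) :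
    ∑ i, f (r i) - ∑ i, f (s i) ≤ fDelta t f (Fintype.card n) ε := by
  have hbound : ∀ Q ∈ doublyStochastic ℝ n,
      ∑ i, f (r i) - ∑ i, f (s i) ≤ fDelta t f (Fintype.card n) (∑ i, max (r i - (Q *ᵥ s) i) 0) ∧
        ∑ i, max (r i - (Q *ᵥ s) i) 0 ∈ Set.Icc 0 t := by
    intro Q hQ
    have hq : ∀ i, 0 ≤ (Q *ᵥ s) i := fun i =>
      Finset.sum_nonneg fun j _ => mul_nonneg (nonneg_of_mem_doublyStochastic hQ) (hs j)
    have hs' : ∀ i, s i ∈ Set.Icc 0 t := fun i =>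
      ⟨hs i, hst ▸ Finset.single_le_sum (fun j _ => hs j) (mem_univ i)⟩
    refine ⟨?_, Finset.sum_nonneg fun i _ => le_max_right _ _, ?_⟩
    · linarith [hf.sum_map_mulVec_le hQ hs', sum_map_sub_sum_map_le_fDelta hf hr hq hrt
        ((sum_mulVec_of_mem_doublyStochastic hQ).trans hst)]
    · exact hrt ▸ Finset.sum_le_sum fun i _ => max_le (by linarith [hq i]) (hr i)
  obtain ⟨hP1, hP0, -⟩ := hbound P hP
  obtain ⟨hR1, -, hRt⟩ := hbound R hR
  rcases le_or_gt ε (t * ((Fintype.card n : ℝ) - 1) / Fintype.card n) with hc | hc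
  · exact hP1.trans (fDelta_monotoneOn hf hd ⟨hP0, hPε.trans hc⟩ ⟨hP0.trans hPε, hc⟩ hPε)
  · exact hR1.trans (fDelta_antitoneOn hf hd ⟨hc.le, hRε.trans hRt⟩ ⟨hc.le.trans hRε, hRt⟩ hRε)

end DoublyStochastic

section Spectral

variable {n : Type*} [Fintype n] [DecidableEq n] {𝕜 : Type*} [RCLike 𝕜]

theorem Matrix.mul_diagonal_mul_star_apply_self (M : Matrix n n 𝕜) (x : n → ℝ) (i : n) :
    (M * diagonal (RCLike.ofReal ∘ x) * star M : Matrix n n 𝕜) i i =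
      (((M.map fun z => ‖z‖ ^ 2) *ᵥ x) i : 𝕜) := by
  rw [Matrix.mul_apply]
  simp only [Matrix.mul_diagonal, Matrix.star_apply, mulVec, dotProduct, Matrix.map_apply,
    Function.comp_apply, RCLike.ofReal_sum, RCLike.ofReal_mul, RCLike.ofReal_pow]
  refine Finset.sum_congr rfl fun j _ => ?_
  rw [← RCLike.mul_conj, RCLike.star_def]
  ring

theorem Matrix.map_norm_sq_mem_doublyStochastic {U : Matrix n n 𝕜}
    (hU : U ∈ unitaryGroup n 𝕜) : (U.map fun z => ‖z‖ ^ 2) ∈ doublyStochastic ℝ n := by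
  have hrow : ∀ V ∈ unitaryGroup n 𝕜, (V.map fun z => ‖z‖ ^ 2) *ᵥ 1 = 1 := fun V hV => by
    funext i
    have h := V.mul_diagonal_mul_star_apply_self 1 i
    rw [show (RCLike.ofReal ∘ (1 : n → ℝ) : n → 𝕜) = 1 from funext fun _ => by simp,
      diagonal_one', Matrix.mul_one, Matrix.mem_unitaryGroup_iff.mp hV, Matrix.one_apply_eq] at h
    exact_mod_cast h.symm
  refine ⟨fun i j => sq_nonneg _, hrow U hU, ?_⟩
  rw [← mulVec_transpose]
  have : (U.map fun z => ‖z‖ ^ 2)ᵀ = (star U).map fun z => ‖z‖ ^ 2 := by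
    ext i j
    simp [Matrix.star_apply]
  rw [this]
  exact hrow (star U) (Unitary.star_mem hU)

theorem Matrix.star_mul_mul_apply_self_of_eq_conj {A W : Matrix n n 𝕜} {x : n → ℝ}
    (hA : A = W * diagonal (RCLike.ofReal ∘ x) * star W) (V : Matrix n n 𝕜) (i : n) :
    (star V * A * V) i i = ((((star V * W).map fun z => ‖z‖ ^ 2) *ᵥ x) i : 𝕜) := by
  rw [hA, ← mul_diagonal_mul_star_apply_self, star_mul, star_star]
  simp only [Matrix.mul_assoc]

theorem Matrix.map_norm_sq_star_mul_self_mulVec {V : Matrix n n 𝕜} (hV : V ∈ unitaryGroup n 𝕜)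
    (x : n → ℝ) : ((star V * V).map fun z => ‖z‖ ^ 2) *ᵥ x = x := by
  rw [mem_unitaryGroup_iff'.mp hV, Matrix.map_one _ (by simp) (by simp), one_mulVec]

section TwoMatrices

variable {ρ σ Uρ Uσ W : Matrix n n 𝕜} {r s a : n → ℝ}
  (hρ : ρ = Uρ * diagonal (RCLike.ofReal ∘ r) * star Uρ)
  (hσ : σ = Uσ * diagonal (RCLike.ofReal ∘ s) * star Uσ)
  (hρσ : ρ - σ = W * diagonal (RCLike.ofReal ∘ a) * star W)
include hρ hσ hρσ

theorem mulVec_map_norm_sq_eq_sub (V : Matrix n n 𝕜) :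
    ((star V * W).map fun z => ‖z‖ ^ 2) *ᵥ a =
      ((star V * Uρ).map fun z => ‖z‖ ^ 2) *ᵥ r - ((star V * Uσ).map fun z => ‖z‖ ^ 2) *ᵥ s := by
  funext i
  have h := star_mul_mul_apply_self_of_eq_conj hρσ V i
  rw [Matrix.mul_sub, Matrix.sub_mul, Matrix.sub_apply, star_mul_mul_apply_self_of_eq_conj hρ,
    star_mul_mul_apply_self_of_eq_conj hσ] at h
  exact_mod_cast h.symm

theorem exists_mem_doublyStochastic_sum_posPart_le (hUρ : Uρ ∈ unitaryGroup n 𝕜)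
    (hUσ : Uσ ∈ unitaryGroup n 𝕜) (hW : W ∈ unitaryGroup n 𝕜) :
    ∃ P ∈ doublyStochastic ℝ n, ∑ i, max (r i - (P *ᵥ s) i) 0 ≤ ∑ i, max (a i) 0 := by
  have h := mulVec_map_norm_sq_eq_sub hρ hσ hρσ Uρ
  rw [map_norm_sq_star_mul_self_mulVec hUρ] at h
  refine ⟨_, map_norm_sq_mem_doublyStochastic (mul_mem (Unitary.star_mem hUρ) hUσ), ?_⟩
  simp only [← Pi.sub_apply r, ← h]
  exact (convexOn_id convex_univ).sup (convexOn_const 0 convex_univ) |>.sum_map_mulVec_le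
    (map_norm_sq_mem_doublyStochastic (mul_mem (Unitary.star_mem hUρ) hW)) fun _ => trivial

theorem exists_mem_doublyStochastic_le_sum_posPart (hUρ : Uρ ∈ unitaryGroup n 𝕜)
    (hUσ : Uσ ∈ unitaryGroup n 𝕜) (hW : W ∈ unitaryGroup n 𝕜) :
    ∃ R ∈ doublyStochastic ℝ n, ∑ i, max (a i) 0 ≤ ∑ i, max (r i - (R *ᵥ s) i) 0 := by
  have h := mulVec_map_norm_sq_eq_sub hρ hσ hρσ W
  rw [map_norm_sq_star_mul_self_mulVec hW] at h
  obtain ⟨R, hR, hle⟩ := exists_mem_doublyStochastic_sum_sub_le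
    (map_norm_sq_mem_doublyStochastic (mul_mem (Unitary.star_mem hW) hUρ))
    (map_norm_sq_mem_doublyStochastic (mul_mem (Unitary.star_mem hW) hUσ)) r s {i | 0 < a i}
  refine ⟨R, hR, ?_⟩
  rw [sum_max_zero_eq_sum_filter]
  simpa only [← Pi.sub_apply, ← h] using hle

end TwoMatrices

theorem Matrix.PosSemidef.sum_eigenvalues_eq {A : Matrix n n 𝕜} (hA : A.PosSemidef) {t : ℝ}
    (ht : A.trace = t) : ∑ i, hA.isHermitian.eigenvalues i = t := by
  rw [hA.isHermitian.trace_eq_sum_eigenvalues, ← RCLike.ofReal_sum] at ht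
  exact_mod_cast ht

theorem sum_map_eigenvalues_sub_le_fDelta {t : ℝ} {f : ℝ → ℝ} (hd : 2 ≤ Fintype.card n)
    (hf : ConvexOn ℝ (Set.Icc 0 t) f) {ρ σ W : Matrix n n 𝕜} (hρ : ρ.PosSemidef)
    (hσ : σ.PosSemidef) (hρt : ρ.trace = t) (hσt : σ.trace = t) (hW : W ∈ unitaryGroup n 𝕜)
    {a : n → ℝ} (hρσ : ρ - σ = W * diagonal (RCLike.ofReal ∘ a) * star W) :
    ∑ i, f (hρ.isHermitian.eigenvalues i) - ∑ i, f (hσ.isHermitian.eigenvalues i) ≤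
      fDelta t f (Fintype.card n) (∑ i, max (a i) 0) := by
  have hρU := hρ.isHermitian.spectral_theorem
  have hσU := hσ.isHermitian.spectral_theorem
  have hUρ := (hρ.isHermitian.eigenvectorUnitary).2
  have hUσ := (hσ.isHermitian.eigenvectorUnitary).2
  obtain ⟨P, hP, hPε⟩ := exists_mem_doublyStochastic_sum_posPart_le hρU hσU hρσ hUρ hUσ hW
  obtain ⟨R, hR, hRε⟩ := exists_mem_doublyStochastic_le_sum_posPart hρU hσU hρσ hUρ hUσ hW
  exact sum_map_sub_sum_map_le_fDelta_of_mem_doublyStochastic hd hf hρ.eigenvalues_nonneg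
    hσ.eigenvalues_nonneg (hρ.sum_eigenvalues_eq hρt) (hσ.sum_eigenvalues_eq hσt) hP hR hPε hRε

end Spectral

theorem fEntropy_continuity_bound_trace_t_general (d : ℕ) (hd : 2 ≤ d) (t : ℝ)
    (f : ℝ → ℝ)
    (hf_conv : ConvexOn ℝ (Set.Icc 0 t) f)
    (ρ σ : Matrix (Fin d) (Fin d) ℂ)
    (hρ : ρ.PosSemidef) (hσ : σ.PosSemidef)
    (hρtr : ρ.trace = (t : ℂ)) (hσtr : σ.trace = (t : ℂ))
    (ε : ℝ)
    (hε : ε = (1/2) * ∑ i, |(hρ.isHermitian.sub hσ.isHermitian).eigenvalues i|) :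
    |(-∑ i, f (hρ.isHermitian.eigenvalues i)) - (-∑ i, f (hσ.isHermitian.eigenvalues i))| ≤
      f t - f (t - ε) - ((d : ℝ) - 1) * (f (ε / ((d : ℝ) - 1)) - f 0) := by
  set hH := hρ.isHermitian.sub hσ.isHermitian
  set a := hH.eigenvalues
  set W : Matrix (Fin d) (Fin d) ℂ := (hH.eigenvectorUnitary : Matrix (Fin d) (Fin d) ℂ)
  have hd' : 2 ≤ Fintype.card (Fin d) := by simpa using hd
  have ha : ∑ i, a i = 0 := by
    have h := hH.trace_eq_sum_eigenvalues
    rw [trace_sub, hρtr, hσtr, sub_self, ← RCLike.ofReal_sum] at h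
    exact RCLike.ofReal_eq_zero.mp h.symm
  have hρσ : ρ - σ = W * diagonal (RCLike.ofReal ∘ a) * star W := hH.spectral_theorem
  have hσρ : σ - ρ = W * diagonal (RCLike.ofReal ∘ (-a)) * star W := by
    rw [← neg_sub, hρσ]
    simp [← diagonal_neg, Function.comp_def]
  have h₁ := sum_map_eigenvalues_sub_le_fDelta hd' hf_conv hρ hσ hρtr hσtr
    hH.eigenvectorUnitary.2 hρσ
  have h₂ := sum_map_eigenvalues_sub_le_fDelta hd' hf_conv hσ hρ hσtr hρtr
    hH.eigenvectorUnitary.2 hσρ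
  rw [← half_mul_sum_abs_eq_sum_max_zero ha, ← hε, Fintype.card_fin] at h₁
  rw [← half_mul_sum_abs_eq_sum_max_zero (by simp [ha])] at h₂
  simp only [Pi.neg_apply, abs_neg, ← hε, Fintype.card_fin] at h₂
  rw [neg_sub_neg, abs_sub_le_iff]
  exact ⟨h₂, h₁⟩

theorem fEntropy_continuity_bound_trace_t (d : ℕ) (hd : 2 ≤ d) (t : ℝ) (ht : 0 ≤ t)
    (f : ℝ → ℝ)
    (hf_cont : ContinuousOn f (Set.Icc 0 t))
    (hf_conv : ConvexOn ℝ (Set.Icc 0 t) f)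
    (ρ σ : Matrix (Fin d) (Fin d) ℂ)
    (hρ : ρ.PosSemidef) (hσ : σ.PosSemidef)
    (hρtr : ρ.trace = (t : ℂ)) (hσtr : σ.trace = (t : ℂ))
    (ε : ℝ)
    (hε : ε = (1/2) * ∑ i, |(hρ.isHermitian.sub hσ.isHermitian).eigenvalues i|) :
    |(-∑ i, f (hρ.isHermitian.eigenvalues i)) - (-∑ i, f (hσ.isHermitian.eigenvalues i))| ≤
      f t - f (t - ε) - ((d : ℝ) - 1) * (f (ε / ((d : ℝ) - 1)) - f 0) :=
  fEntropy_continuity_bound_trace_t_general d hd t f hf_conv ρ σ hρ hσ hρtr hσtr ε hε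
end

section
/- Let d ≥ 2 and let f : [0,1] → ℝ be a continuous convex function. Then the function ε ↦ Δ_{f;d}(ε) := f(1) − f(1−ε) − (d−1)·(f(ε/(d−1)) − f(0)) is nondecreasing on the interval [0, 1 − 1/d] and nonincreasing on the interval [1 − 1/d, 1]. -/
lemma slope_le_slope_of_convex {s : Set ℝ} {f : ℝ → ℝ} (hf : ConvexOn ℝ s f)
    {x1 y1 x2 y2 : ℝ} (hx1 : x1 ∈ s) (hy1 : y1 ∈ s) (hx2 : x2 ∈ s) (hy2 : y2 ∈ s)
    (h1 : x1 < y1) (h12 : y1 ≤ x2) (h2 : x2 < y2) :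
    (f y1 - f x1) / (y1 - x1) ≤ (f y2 - f x2) / (y2 - x2) := by
  have hx1y2 : x1 < y2 := lt_of_lt_of_le h1 (h12.trans h2.le)
  have hA : (f y1 - f x1) / (y1 - x1) ≤ (f y2 - f x1) / (y2 - x1) :=
    hf.secant_mono hx1 hy1 hy2 h1.ne' hx1y2.ne' (h12.trans h2.le)
  have hB : (f x1 - f y2) / (x1 - y2) ≤ (f x2 - f y2) / (x2 - y2) :=
    hf.secant_mono hy2 hx1 hx2 hx1y2.ne h2.ne (h1.le.trans h12)
  have e1 : (f x1 - f y2) / (x1 - y2) = (f y2 - f x1) / (y2 - x1) := by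
    rw [← neg_div_neg_eq]; ring_nf
  have e2 : (f x2 - f y2) / (x2 - y2) = (f y2 - f x2) / (y2 - x2) := by
    rw [← neg_div_neg_eq]; ring_nf
  rw [e1, e2] at hB
  exact hA.trans hB

theorem Delta_monotone_antitone (d : ℕ) (hd : 2 ≤ d) (f : ℝ → ℝ)
    (hf_cont : ContinuousOn f (Set.Icc 0 1))
    (hf_conv : ConvexOn ℝ (Set.Icc 0 1) f) :
    MonotoneOn
      (fun ε : ℝ => f 1 - f (1 - ε) - ((d : ℝ) - 1) * (f (ε / ((d : ℝ) - 1)) - f 0))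
      (Set.Icc 0 (1 - 1/(d : ℝ))) ∧
    AntitoneOn
      (fun ε : ℝ => f 1 - f (1 - ε) - ((d : ℝ) - 1) * (f (ε / ((d : ℝ) - 1)) - f 0))
      (Set.Icc (1 - 1/(d : ℝ)) 1) := by
  have hd2 : (2 : ℝ) ≤ (d : ℝ) := by exact_mod_cast hd
  have hdpos : (0 : ℝ) < (d : ℝ) := by linarith
  have hd1 : (0 : ℝ) < (d : ℝ) - 1 := by linarith
  have hfrac : (1 : ℝ) - 1/(d : ℝ) = ((d : ℝ) - 1) / (d : ℝ) := by field_simp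
  have hinvpos : (0 : ℝ) < 1/(d : ℝ) := by positivity
  have hinvle : (1 : ℝ)/(d : ℝ) ≤ 1/2 := by rw [div_le_div_iff₀ hdpos (by norm_num)]; linarith
  constructor
  · intro a ha b hb hab
    rcases eq_or_lt_of_le hab with rfl | hab
    · exact le_refl _
    obtain ⟨ha0, ha1⟩ := ha
    obtain ⟨hb0, hb1⟩ := hb
    have hba : (0 : ℝ) < b - a := by linarith
    have hb1' : b * (d : ℝ) ≤ (d : ℝ) - 1 := by
      rw [hfrac, le_div_iff₀ hdpos] at hb1; exact hb1
    have key : (f (b / ((d:ℝ)-1)) - f (a / ((d:ℝ)-1))) / (b / ((d:ℝ)-1) - a / ((d:ℝ)-1))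
        ≤ (f (1 - a) - f (1 - b)) / ((1 - a) - (1 - b)) := by
      apply slope_le_slope_of_convex hf_conv
      · exact ⟨by positivity, by rw [div_le_one hd1]; linarith⟩
      · exact ⟨by positivity, by rw [div_le_one hd1]; nlinarith⟩
      · exact ⟨by nlinarith, by linarith⟩
      · exact ⟨by nlinarith, by linarith⟩
      · exact (div_lt_div_iff_of_pos_right hd1).mpr hab
      · rw [div_le_iff₀ hd1]; nlinarith
      · linarith
    have e1 : b / ((d:ℝ)-1) - a / ((d:ℝ)-1) = (b - a) / ((d:ℝ)-1) := by ring
    have e2 : (f (b / ((d:ℝ)-1)) - f (a / ((d:ℝ)-1))) / ((b - a) / ((d:ℝ)-1))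
        = (((d:ℝ)-1) * (f (b / ((d:ℝ)-1)) - f (a / ((d:ℝ)-1)))) / (b - a) := by
      field_simp
    have e3 : (1 - a) - (1 - b) = b - a := by ring
    rw [e1, e2, e3] at key
    have key' := (div_le_div_iff_of_pos_right hba).mp key
    simp only
    linarith
  · intro a ha b hb hab
    rcases eq_or_lt_of_le hab with rfl | hab
    · exact le_refl _
    obtain ⟨ha0, ha1⟩ := ha
    obtain ⟨hb0, hb1⟩ := hb
    have hba : (0 : ℝ) < b - a := by linarith
    have ha0' : (d : ℝ) - 1 ≤ a * (d : ℝ) := by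
      rw [hfrac, div_le_iff₀ hdpos] at ha0; exact ha0
    have ha0'' : (0:ℝ) ≤ a := by linarith
    have hb0'' : (0:ℝ) ≤ b := by linarith
    have key : (f (1 - a) - f (1 - b)) / ((1 - a) - (1 - b))
        ≤ (f (b / ((d:ℝ)-1)) - f (a / ((d:ℝ)-1))) / (b / ((d:ℝ)-1) - a / ((d:ℝ)-1)) := by
      apply slope_le_slope_of_convex hf_conv
      · exact ⟨by linarith, by linarith⟩
      · exact ⟨by linarith, by linarith⟩
      · exact ⟨div_nonneg ha0'' hd1.le, by rw [div_le_one hd1]; linarith⟩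
      · exact ⟨div_nonneg hb0'' hd1.le, by rw [div_le_one hd1]; linarith⟩
      · linarith
      · rw [le_div_iff₀ hd1]; nlinarith
      · exact (div_lt_div_iff_of_pos_right hd1).mpr hab
    have e1 : b / ((d:ℝ)-1) - a / ((d:ℝ)-1) = (b - a) / ((d:ℝ)-1) := by ring
    have e2 : (f (b / ((d:ℝ)-1)) - f (a / ((d:ℝ)-1))) / ((b - a) / ((d:ℝ)-1))
        = (((d:ℝ)-1) * (f (b / ((d:ℝ)-1)) - f (a / ((d:ℝ)-1)))) / (b - a) := by
      field_simp
    have e3 : (1 - a) - (1 - b) = b - a := by ring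
    rw [e1, e2, e3] at key
    have key' := (div_le_div_iff_of_pos_right hba).mp key
    simp only
    linarith
end

section
/- Let d ≥ 2, let f : [0,1] → ℝ be a continuous convex function, and let ε ∈ [0,1]. Then for all probability vectors p = (p_1,…,p_d) and q = (q_1,…,q_d) (nonnegative entries summing to 1) with (1/2)·Σ_{i=1}^d |p_i − q_i| = ε, one has D_f(p,q) := Σ_{i=1}^d f(p_i) − Σ_{i=1}^d f(q_i) ≤ Δ_{f;d}(ε) := f(1) − f(1−ε) − (d−1)·(f(ε/(d−1)) − f(0)). -/
open BigOperators

/-- Shift lemma: for convex f on [0,1], the increment over an interval is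
at most the increment over a translated-to-the-right interval of the same length. -/
lemma shift_ineq (f : ℝ → ℝ) (hf : ConvexOn ℝ (Set.Icc 0 1) f)
    {a b c e : ℝ} (ha : 0 ≤ a) (he : e ≤ 1) (hab : a ≤ b) (hce : c ≤ e)
    (hac : a ≤ c) (hlen : b - a = e - c) :
    f b - f a ≤ f e - f c := by
  have hbe : b ≤ e := by linarith
  have hma : a ∈ Set.Icc (0:ℝ) 1 := ⟨ha, by linarith⟩
  have hmb : b ∈ Set.Icc (0:ℝ) 1 := ⟨by linarith, by linarith⟩
  have hmc : c ∈ Set.Icc (0:ℝ) 1 := ⟨by linarith, by linarith⟩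
  have hme : e ∈ Set.Icc (0:ℝ) 1 := ⟨by linarith, he⟩
  rcases eq_or_lt_of_le hab with rfl | hab'
  · have : c = e := by linarith
    simp [this]
  · have hce' : c < e := by linarith
    have h1 : (f b - f a) / (b - a) ≤ (f e - f a) / (e - a) :=
      hf.secant_mono hma hmb hme (by linarith) (by linarith) hbe
    have h2 : (f a - f e) / (a - e) ≤ (f c - f e) / (c - e) :=
      hf.secant_mono hme hma hmc (by linarith) (by linarith) hac
    have h2' : (f e - f a) / (e - a) ≤ (f e - f c) / (e - c) := by
      have e1 : (f a - f e) / (a - e) = (f e - f a) / (e - a) := by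
        rw [← neg_div_neg_eq]; ring_nf
      have e2 : (f c - f e) / (c - e) = (f e - f c) / (e - c) := by
        rw [← neg_div_neg_eq]; ring_nf
      rw [e1, e2] at h2; exact h2
    have hslope : (f b - f a) / (b - a) ≤ (f e - f c) / (e - c) := h1.trans h2'
    have hba : (0:ℝ) < b - a := by linarith
    have := (div_le_div_iff₀ hba (by linarith : (0:ℝ) < e - c)).mp hslope
    have hec : e - c = b - a := hlen.symm
    rw [hec] at this
    exact le_of_mul_le_mul_right this hba

/-- Stacking lemma: sum of increments over intervals [q i, p i] ⊆ [0,1] with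
∑ p ≤ 1 is at most the increment over the top interval of total length. -/
lemma sum_diff_le (f : ℝ → ℝ) (hf : ConvexOn ℝ (Set.Icc 0 1) f)
    {ι : Type*} [DecidableEq ι] (T : Finset ι) (p q : ι → ℝ)
    (hq0 : ∀ i ∈ T, 0 ≤ q i) (hqp : ∀ i ∈ T, q i ≤ p i)
    (hps : ∑ i ∈ T, p i ≤ 1) :
    ∑ i ∈ T, (f (p i) - f (q i)) ≤ f 1 - f (1 - ∑ i ∈ T, (p i - q i)) := by
  induction T using Finset.induction with
  | empty => simp
  | @insert a T ha ih =>
    have hq0' : ∀ i ∈ T, 0 ≤ q i := fun i hi => hq0 i (Finset.mem_insert_of_mem hi)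
    have hqp' : ∀ i ∈ T, q i ≤ p i := fun i hi => hqp i (Finset.mem_insert_of_mem hi)
    have hpa0 : 0 ≤ q a := hq0 a (Finset.mem_insert_self a T)
    have hqpa : q a ≤ p a := hqp a (Finset.mem_insert_self a T)
    rw [Finset.sum_insert ha, Finset.sum_insert ha] at *
    have hps' : ∑ i ∈ T, p i ≤ 1 := by
      have : 0 ≤ p a := le_trans hpa0 hqpa
      linarith
    have IH := ih hq0' hqp' hps'
    set s := ∑ i ∈ T, (p i - q i) with hs
    have hs0 : 0 ≤ s := Finset.sum_nonneg fun i hi => by linarith [hqp' i hi, hq0' i hi]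
    have hsle : s ≤ ∑ i ∈ T, p i := by
      rw [hs]
      apply Finset.sum_le_sum
      intro i hi; linarith [hq0' i hi]
    -- key: f (p a) - f (q a) ≤ f (1 - s) - f (1 - s - (p a - q a))
    have key : f (p a) - f (q a) ≤ f (1 - s) - f (1 - s - (p a - q a)) := by
      apply shift_ineq f hf hpa0 (by linarith) hqpa (by linarith) (by linarith) (by ring)
    have : 1 - (p a - q a + s) = 1 - s - (p a - q a) := by ring
    rw [this]
    linarith

theorem Df_le_Delta (d : ℕ) (hd : 2 ≤ d) (f : ℝ → ℝ)
    (hf_cont : ContinuousOn f (Set.Icc 0 1))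
    (hf_conv : ConvexOn ℝ (Set.Icc 0 1) f)
    (ε : ℝ) (hε : ε ∈ Set.Icc (0 : ℝ) 1)
    (p q : Fin d → ℝ)
    (hp0 : ∀ i, 0 ≤ p i) (hp1 : ∑ i, p i = 1)
    (hq0 : ∀ i, 0 ≤ q i) (hq1 : ∑ i, q i = 1)
    (hpq : (1/2) * ∑ i, |p i - q i| = ε) :
    ∑ i, f (p i) - ∑ i, f (q i) ≤
      f 1 - f (1 - ε) - ((d : ℝ) - 1) * (f (ε / ((d : ℝ) - 1)) - f 0) := by
  obtain ⟨hε0, hε1⟩ := hε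
  have hqle1 : ∀ i, q i ≤ 1 := by
    intro i
    rw [← hq1]
    exact Finset.single_le_sum (fun j _ => hq0 j) (Finset.mem_univ i)
  set S : Finset (Fin d) := Finset.univ.filter (fun i => q i ≤ p i) with hS
  set Sc : Finset (Fin d) := Finset.univ.filter (fun i => ¬ q i ≤ p i) with hSc
  have hsplit : ∀ g : Fin d → ℝ,
      ∑ i ∈ S, g i + ∑ i ∈ Sc, g i = ∑ i, g i := fun g =>
    Finset.sum_filter_add_sum_filter_not _ _ _
  have hzero : ∑ i ∈ S, (p i - q i) + ∑ i ∈ Sc, (p i - q i) = 0 := by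
    rw [hsplit (fun i => p i - q i)]
    rw [Finset.sum_sub_distrib, hp1, hq1]; ring
  have habs : ∑ i ∈ S, (p i - q i) - ∑ i ∈ Sc, (p i - q i) = 2 * ε := by
    have h1 : ∑ i ∈ S, |p i - q i| = ∑ i ∈ S, (p i - q i) := by
      apply Finset.sum_congr rfl
      intro i hi
      rw [hS, Finset.mem_filter] at hi
      exact abs_of_nonneg (by linarith [hi.2])
    have h2 : ∑ i ∈ Sc, |p i - q i| = ∑ i ∈ Sc, -(p i - q i) := by
      apply Finset.sum_congr rfl
      intro i hi
      rw [hSc, Finset.mem_filter] at hi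
      have : p i < q i := lt_of_not_ge hi.2
      rw [abs_of_nonpos (by linarith)]
    have := hsplit (fun i => |p i - q i|)
    rw [h1, h2, Finset.sum_neg_distrib] at this
    have habs' : ∑ i, |p i - q i| = 2 * ε := by linarith [hpq]
    linarith [this, habs']
  have hSsum : ∑ i ∈ S, (p i - q i) = ε := by linarith
  have hScsum : ∑ i ∈ Sc, (q i - p i) = ε := by
    have : ∑ i ∈ Sc, (q i - p i) = - ∑ i ∈ Sc, (p i - q i) := by
      rw [← Finset.sum_neg_distrib]; apply Finset.sum_congr rfl; intros; ring
    rw [this]; linarith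
  -- Part A
  have hSp : ∑ i ∈ S, p i ≤ 1 := by
    rw [← hp1]
    exact Finset.sum_le_sum_of_subset_of_nonneg (Finset.filter_subset _ _)
      (fun i _ _ => hp0 i)
  have partA : ∑ i ∈ S, (f (p i) - f (q i)) ≤ f 1 - f (1 - ε) := by
    have := sum_diff_le f hf_conv S p q
      (fun i _ => hq0 i)
      (fun i hi => by rw [hS, Finset.mem_filter] at hi; exact hi.2)
      hSp
    rwa [hSsum] at this
  -- Part B
  have hSne : S.Nonempty := by
    by_contra h
    rw [Finset.not_nonempty_iff_eq_empty] at h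
    have hall : ∀ i, p i < q i := by
      intro i
      by_contra hc
      have : i ∈ S := by
        rw [hS, Finset.mem_filter]
        exact ⟨Finset.mem_univ i, not_lt.mp hc⟩
      simp [h] at this
    have : ∑ i, p i < ∑ i, q i := by
      haveI : Nonempty (Fin d) := ⟨⟨0, by omega⟩⟩
      apply Finset.sum_lt_sum_of_nonempty
      · exact Finset.univ_nonempty
      · intro i _; exact hall i
    rw [hp1, hq1] at this; exact lt_irrefl 1 this
  obtain ⟨i0, hi0⟩ := hSne
  set T' : Finset (Fin d) := Finset.univ.erase i0 with hT'
  have hScT' : Sc ⊆ T' := by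
    intro i hi
    rw [hSc, Finset.mem_filter] at hi
    rw [hT', Finset.mem_erase]
    refine ⟨?_, Finset.mem_univ i⟩
    intro h; rw [h] at hi
    rw [hS, Finset.mem_filter] at hi0
    exact hi.2 hi0.2
  have hcardT' : (T'.card : ℝ) = (d : ℝ) - 1 := by
    rw [hT', Finset.card_erase_of_mem (Finset.mem_univ i0), Finset.card_univ,
      Fintype.card_fin]
    have : 1 ≤ d := by omega
    push_cast [this]
    ring
  have hk1 : (1:ℝ) ≤ (d:ℝ) - 1 := by
    have : (2:ℝ) ≤ (d:ℝ) := by exact_mod_cast hd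
    linarith
  have hkpos : (0:ℝ) < (d:ℝ) - 1 := by linarith
  -- g: extended gaps
  set g : Fin d → ℝ := fun i => if q i ≤ p i then 0 else q i - p i with hg
  have hg0 : ∀ i, 0 ≤ g i := by
    intro i
    rw [hg]
    by_cases h : q i ≤ p i
    · simp [h]
    · simp [h]; linarith [lt_of_not_ge h]
  have hg1 : ∀ i, g i ≤ 1 := by
    intro i
    rw [hg]
    by_cases h : q i ≤ p i
    · simp [h]
    · simp [h]; linarith [hqle1 i, hp0 i]
  have hgsum : ∑ i ∈ T', g i = ε := by
    rw [← hScsum]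
    rw [← Finset.sum_subset hScT' (fun i hiT hiSc => ?_)]
    · apply Finset.sum_congr rfl
      intro i hi
      rw [hSc, Finset.mem_filter] at hi
      rw [hg]; simp [hi.2]
    · rw [hSc, Finset.mem_filter] at hiSc
      push_neg at hiSc
      have : q i ≤ p i := hiSc (Finset.mem_univ i)
      rw [hg]; simp [this]
  -- Jensen
  have jensen : ((d:ℝ) - 1) * f (ε / ((d:ℝ) - 1)) ≤ ∑ i ∈ T', f (g i) := by
    have hw : ∑ _i ∈ T', ((d:ℝ) - 1)⁻¹ = 1 := by
      rw [Finset.sum_const, nsmul_eq_mul, hcardT']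
      field_simp
    have := hf_conv.map_sum_le (t := T') (w := fun _ => ((d:ℝ) - 1)⁻¹) (p := g)
      (fun i _ => by positivity) hw (fun i _ => ⟨hg0 i, hg1 i⟩)
    have hsum1 : ∑ i ∈ T', ((d:ℝ) - 1)⁻¹ • g i = ε / ((d:ℝ) - 1) := by
      simp only [smul_eq_mul, ← Finset.mul_sum, hgsum]
      field_simp
    rw [hsum1] at this
    have hsum2 : ∑ i ∈ T', ((d:ℝ) - 1)⁻¹ • f (g i)
        = ((d:ℝ) - 1)⁻¹ * ∑ i ∈ T', f (g i) := by
      simp only [smul_eq_mul, ← Finset.mul_sum]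
    rw [hsum2] at this
    calc ((d:ℝ)-1) * f (ε/((d:ℝ)-1))
        ≤ ((d:ℝ)-1) * (((d:ℝ)-1)⁻¹ * ∑ i ∈ T', f (g i)) :=
          mul_le_mul_of_nonneg_left this hkpos.le
      _ = ∑ i ∈ T', f (g i) := by field_simp
  have partB : ((d:ℝ) - 1) * (f (ε / ((d:ℝ) - 1)) - f 0)
      ≤ ∑ i ∈ Sc, (f (q i) - f (p i)) := by
    -- step 1: per-coordinate
    have step1 : ∑ i ∈ Sc, (f (g i) - f 0) ≤ ∑ i ∈ Sc, (f (q i) - f (p i)) := by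
      apply Finset.sum_le_sum
      intro i hi
      rw [hSc, Finset.mem_filter] at hi
      have hpi : p i < q i := lt_of_not_ge hi.2
      have hgi : g i = q i - p i := by rw [hg]; simp [hi.2]
      rw [hgi]
      have := shift_ineq f hf_conv (a := 0) (b := q i - p i) (c := p i) (e := q i)
        le_rfl (hqle1 i) (by linarith) (by linarith) (hp0 i) (by ring)
      linarith
    -- step 2: extend to T'
    have step2 : ∑ i ∈ T', (f (g i) - f 0) = ∑ i ∈ Sc, (f (g i) - f 0) := by
      symm
      apply Finset.sum_subset hScT'
      intro i hiT hiSc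
      rw [hSc, Finset.mem_filter] at hiSc
      push_neg at hiSc
      have : q i ≤ p i := hiSc (Finset.mem_univ i)
      rw [hg]; simp [this]
    have step3 : ((d:ℝ) - 1) * (f (ε / ((d:ℝ) - 1)) - f 0)
        ≤ ∑ i ∈ T', (f (g i) - f 0) := by
      rw [Finset.sum_sub_distrib, Finset.sum_const, nsmul_eq_mul, hcardT']
      nlinarith [jensen]
    linarith
  -- assemble
  have hfin : ∑ i, f (p i) - ∑ i, f (q i)
      = ∑ i ∈ S, (f (p i) - f (q i)) - ∑ i ∈ Sc, (f (q i) - f (p i)) := by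
    have h1 := hsplit (fun i => f (p i))
    have h2 := hsplit (fun i => f (q i))
    simp only [Finset.sum_sub_distrib]
    linarith
  rw [hfin]
  linarith
end

section
/- Let f : [0,1] → ℝ be a convex function and let a, b ∈ [0,1] with a ≥ b, and set ε := a − b. Then (f(a) − f(b)) − (f(1−b) − f(1−a)) ≤ (f(1) − f(1−ε)) − (f(ε) − f(0)). Consequently, for d = 2 and any probability vectors p = (a, 1−a), q = (b, 1−b) with ε = |a−b|, D_f(p,q) ≤ Δ_{f;2}(ε). -/
/-!
The increment `f (z + ε) - f z` of a convex function is nondecreasing in `z`. Comparing it at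
`b ≤ 1 - ε` gives `f a - f b ≤ f 1 - f (1 - ε)`, and at `0 ≤ 1 - a` gives
`f ε - f 0 ≤ f (1 - b) - f (1 - a)`; subtracting the two is the claim.
-/

theorem ConvexOn.map_add_map_le_of_add_eq {𝕜 β : Type*} [Field 𝕜] [LinearOrder 𝕜]
    [IsStrictOrderedRing 𝕜] [AddCommMonoid β] [PartialOrder β] [IsOrderedAddMonoid β]
    [Module 𝕜 β] {s : Set 𝕜} {f : 𝕜 → β} (hf : ConvexOn 𝕜 s f) {x x' y y' : 𝕜}
    (hx : x ∈ s) (hy' : y' ∈ s) (hxx' : x ≤ x') (hxy : x ≤ y) (h : x' + y = x + y') :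
    f x' + f y ≤ f x + f y' := by
  rcases (add_nonneg (sub_nonneg.2 hxx') (sub_nonneg.2 hxy)).eq_or_lt with hD | hD
  · obtain rfl : x' = x := by linarith
    obtain rfl : y = y' := by linarith
    rw [add_comm]
  set t := (x' - x) / (x' - x + (y - x))
  set u := (y - x) / (x' - x + (y - x))
  have ht : 0 ≤ t := div_nonneg (sub_nonneg.2 hxx') hD.le
  have hu : 0 ≤ u := div_nonneg (sub_nonneg.2 hxy) hD.le
  have hut : u + t = 1 := by rw [← add_div, add_comm, div_self hD.ne']
  have hx' : u • x + t • y' = x' := by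
    simp only [smul_eq_mul, t, u]; field_simp; linear_combination (x - x') * h
  have hy : t • x + u • y' = y := by
    simp only [smul_eq_mul, t, u]; field_simp; linear_combination (x - y) * h
  calc f x' + f y ≤ (u • f x + t • f y') + (t • f x + u • f y') := by
        rw [← hx', ← hy]
        exact add_le_add (hf.2 hx hy' hu ht hut) (hf.2 hx hy' ht hu (by rwa [add_comm]))
    _ = f x + f y' := by
        rw [add_add_add_comm, ← add_smul, ← add_smul, add_comm t, hut, one_smul, one_smul]

theorem dim_two_case (f : ℝ → ℝ) (hf_conv : ConvexOn ℝ (Set.Icc 0 1) f)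
    (a b : ℝ) (ha : a ∈ Set.Icc (0 : ℝ) 1) (hb : b ∈ Set.Icc (0 : ℝ) 1)
    (hab : b ≤ a) (ε : ℝ) (hε : ε = a - b) :
    (f a - f b) - (f (1 - b) - f (1 - a)) ≤
      (f 1 - f (1 - ε)) - (f ε - f 0) ∧
    (f a + f (1 - a)) - (f b + f (1 - b)) ≤
      f 1 - f (1 - ε) - (f ε - f 0) := by
  obtain ⟨ha₀, ha₁⟩ := ha
  obtain ⟨hb₀, hb₁⟩ := hb
  have h₁ : f a + f (1 - ε) ≤ f b + f 1 :=
    hf_conv.map_add_map_le_of_add_eq ⟨hb₀, hb₁⟩ ⟨zero_le_one, le_rfl⟩ hab (by linarith)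
      (by linarith)
  have h₂ : f ε + f (1 - a) ≤ f 0 + f (1 - b) :=
    hf_conv.map_add_map_le_of_add_eq ⟨le_rfl, zero_le_one⟩ ⟨by linarith, by linarith⟩
      (by linarith) (by linarith) (by linarith)
  constructor <;> linarith
end

section
/- Let d ≥ 2, let f : [0,1] → ℝ be a convex differentiable function, let ε ∈ (0,1), and let x ∈ [ε,1] satisfy (1 − x + ε)/(d−1) > 1 − x. Define h(u) := f(u) − f(u−ε) + f(1−u) − (d−1)·f((1−u+ε)/(d−1)) for u ∈ [x,1]. Then h(x) ≤ h(1); equivalently, f(x) − f(x−ε) + f(1−x) − (d−1)·f((1−x+ε)/(d−1)) ≤ f(1) − f(1−ε) + f(0) − (d−1)·f(ε/(d−1)). -/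
lemma slope_mono_both (f : ℝ → ℝ) (hf : ConvexOn ℝ (Set.Icc 0 1) f)
    {a b a' b' : ℝ} (ha : a ∈ Set.Icc (0:ℝ) 1) (hb : b ∈ Set.Icc (0:ℝ) 1)
    (ha' : a' ∈ Set.Icc (0:ℝ) 1) (hb' : b' ∈ Set.Icc (0:ℝ) 1)
    (hab : a < b) (hab' : a' < b') (haa' : a ≤ a') (hbb' : b ≤ b') :
    (f b - f a) / (b - a) ≤ (f b' - f a') / (b' - a') := by
  have h1 : (f b - f a) / (b - a) ≤ (f b' - f a) / (b' - a) :=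
    hf.secant_mono ha hb hb' hab.ne' (lt_of_lt_of_le hab hbb').ne' hbb'
  have h2 : (f a - f b') / (a - b') ≤ (f a' - f b') / (a' - b') :=
    hf.secant_mono hb' ha ha' (lt_of_lt_of_le hab hbb').ne hab'.ne haa'
  have e1 : (f a - f b') / (a - b') = (f b' - f a) / (b' - a) := by
    rw [← neg_div_neg_eq]; ring_nf
  have e2 : (f a' - f b') / (a' - b') = (f b' - f a') / (b' - a') := by
    rw [← neg_div_neg_eq]; ring_nf
  rw [e1, e2] at h2
  linarith

theorem h_le_h_one (d : ℕ) (hd : 2 ≤ d) (f : ℝ → ℝ)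
    (hf_conv : ConvexOn ℝ (Set.Icc 0 1) f)
    (hf_diff : DifferentiableOn ℝ f (Set.Icc 0 1))
    (ε : ℝ) (hε : ε ∈ Set.Ioo (0 : ℝ) 1)
    (x : ℝ) (hx : x ∈ Set.Icc ε 1)
    (hcond : (1 - x + ε) / ((d : ℝ) - 1) > 1 - x) :
    f x - f (x - ε) + f (1 - x) - ((d : ℝ) - 1) * f ((1 - x + ε) / ((d : ℝ) - 1)) ≤
      f 1 - f (1 - ε) + f 0 - ((d : ℝ) - 1) * f (ε / ((d : ℝ) - 1)) := by
  obtain ⟨hε0, hε1⟩ := hε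
  obtain ⟨hxε, hx1⟩ := hx
  set c : ℝ := (d : ℝ) - 1 with hc
  have hc1 : (1:ℝ) ≤ c := by
    have : (2:ℝ) ≤ (d:ℝ) := by exact_mod_cast hd
    simp [hc]; linarith
  have hc0 : (0:ℝ) < c := by linarith
  -- Part 1: f 1 - f x ≥ f (1-ε) - f (x-ε)
  have part1 : f (1 - ε) - f (x - ε) ≤ f 1 - f x := by
    rcases eq_or_lt_of_le hx1 with rfl | hx1'
    · simp
    · have key := slope_mono_both f hf_conv
        (a := x - ε) (b := 1 - ε) (a' := x) (b' := 1)
        ⟨by linarith, by linarith⟩ ⟨by linarith, by linarith⟩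
        ⟨by linarith, by linarith⟩ ⟨by norm_num, le_refl 1⟩
        (by linarith) (by linarith) (by linarith) (by linarith)
      have hne : (1:ℝ) - ε - (x - ε) = 1 - x := by ring
      rw [hne] at key
      have hpos : (0:ℝ) < 1 - x := by linarith
      rw [div_le_div_iff₀ hpos hpos] at key
      nlinarith
  -- Part 2: f (1-x) - f 0 ≤ c * (f ((1-x+ε)/c) - f (ε/c))
  have part2 : f (1 - x) - f 0 ≤ c * (f ((1 - x + ε) / c) - f (ε / c)) := by
    set s : ℝ := 1 - x with hs
    rcases eq_or_lt_of_le hx1 with rfl | hx1'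
    · simp [hs]
    · have hs0 : 0 < s := by simp [hs]; linarith
      have hεc : ε / c ≤ ε := by
        rw [div_le_iff₀ hc0]; nlinarith
      have hsum1 : s + ε ≤ 1 := by simp [hs]; linarith
      have key := slope_mono_both f hf_conv
        (a := 0) (b := s) (a' := ε / c) (b' := (s + ε) / c)
        ⟨le_refl 0, by norm_num⟩ ⟨by linarith, by linarith⟩
        ⟨by positivity, by linarith⟩
        ⟨by positivity, by rw [div_le_one hc0]; linarith⟩
        hs0 (by rw [div_lt_div_iff₀ hc0 hc0]; nlinarith)
        (by positivity) (by simp [hs] at hcond ⊢; linarith)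
      have hd2 : (s + ε) / c - ε / c = s / c := by ring
      rw [hd2, sub_zero] at key
      have hsc : 0 < s / c := by positivity
      rw [div_le_div_iff₀ hs0 hsc] at key
      have : (f s - f 0) * (s / c) ≤ (f ((s + ε) / c) - f (ε / c)) * s := key
      have hcC : (f s - f 0) * s ≤ c * (f ((s + ε) / c) - f (ε / c)) * s := by
        have := mul_le_mul_of_nonneg_left key (le_of_lt hc0)
        calc (f s - f 0) * s = c * ((f s - f 0) * (s / c)) := by field_simp
          _ ≤ c * ((f ((s + ε) / c) - f (ε / c)) * s) := this
          _ = c * (f ((s + ε) / c) - f (ε / c)) * s := by ring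
      nlinarith
  have hne2 : 1 - x + ε = (1 - x) + ε := by ring
  calc f x - f (x - ε) + f (1 - x) - c * f ((1 - x + ε) / c)
      ≤ f 1 - f (1 - ε) + f (1 - x) - c * f ((1 - x + ε) / c) := by linarith
    _ ≤ f 1 - f (1 - ε) + f 0 - c * f (ε / c) := by
        have := part2; rw [hne2]; linarith [mul_sub c (f (((1-x) + ε)/c)) (f (ε/c))]
end

section
/- Let d ≥ 2 and let ρ and σ be density matrices of dimension d. Then with ε := T(ρ,σ) the trace distance, the von Neumann entropies satisfy |S(ρ) − S(σ)| ≤ h(ε) + ε·log₂(d−1), where h(ε) := −ε·log₂ ε − (1−ε)·log₂(1−ε) (with 0·log₂ 0 := 0). -/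
open Matrix BigOperators ComplexOrder

/-!
Classically, for probability vectors `p, q` at total variation `δ`, the maximal coupling of `p`
and `q` has mass `1 - δ` on the diagonal, so Fano's inequality gives
`H p - H q ≤ h δ + δ log (d - 1)` (natural logarithms throughout; base 2 only rescales).

For density matrices let `r` be the diagonal of `ρ` in an eigenbasis of `σ`. It is the spectrum
of `ρ` mixed by the unistochastic, hence doubly stochastic, matrix `|U_σ^* U_ρ|²`, so
`S ρ ≤ H r`; and `r - λ(σ)` is the spectrum of `ρ - σ` mixed in the same way, so the total
variation of `r` and `λ(σ)` is at most `ε`. As `h ε + ε log (d - 1)` increases on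
`[0, 1 - 1/d]`, this proves the bound there. For larger `ε`, the diagonals of `ρ` and `σ` in an
eigenbasis of `ρ - σ` are at total variation exactly `ε`, which forces `ε ≤ 1 - λ_min(ρ)`;
grouping all eigenvalues of `ρ` but the smallest then bounds `S ρ` alone by the right-hand
side, which is decreasing there.
-/

open Real Finset

noncomputable def shannonEntropy {ι : Type*} [Fintype ι] (p : ι → ℝ) : ℝ :=
  ∑ i, negMulLog (p i)

section Classical

variable {ι : Type*}

lemma negMulLog_sum_le_sum_negMulLog (s : Finset ι) (f : ι → ℝ) (hf : ∀ i ∈ s, 0 ≤ f i) :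
    negMulLog (∑ i ∈ s, f i) ≤ ∑ i ∈ s, negMulLog (f i) := by
  rw [negMulLog, neg_mul, sum_mul, ← sum_neg_distrib]
  refine sum_le_sum fun i hi => ?_
  rcases (hf i hi).eq_or_lt with h0 | h0
  · simp [← h0]
  · have := log_le_log h0 (single_le_sum hf hi)
    rw [negMulLog]
    nlinarith

/-- Jensen: entropy is at most `log #s`, scaled by the total mass `∑ f`. -/
lemma sum_negMulLog_le_negMulLog_sum_add_mul_log_card (s : Finset ι) (f : ι → ℝ)
    (hf : ∀ i ∈ s, 0 ≤ f i) :
    ∑ i ∈ s, negMulLog (f i) ≤ negMulLog (∑ i ∈ s, f i) + (∑ i ∈ s, f i) * log #s := by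
  rcases s.eq_empty_or_nonempty with rfl | hs
  · simp
  have hcard : (0 : ℝ) < #s := by exact_mod_cast hs.card_pos
  have hjensen := concaveOn_negMulLog.le_map_sum (t := s) (w := fun _ => (#s : ℝ)⁻¹) (p := f)
    (fun _ _ => by positivity) (by simp [hcard.ne']) hf
  simp only [smul_eq_mul, ← mul_sum] at hjensen
  have hscale : (#s : ℝ) * negMulLog ((#s : ℝ)⁻¹ * ∑ i ∈ s, f i) =
      negMulLog (∑ i ∈ s, f i) + (∑ i ∈ s, f i) * log #s := by
    rw [negMulLog_mul, negMulLog, log_inv]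
    field_simp
    ring
  rw [← hscale, ← inv_mul_le_iff₀ hcard]
  exact hjensen

/-- Chain rule for the binary entropy. -/
lemma mul_binEntropy_div {s : ℝ} (hs : s ≠ 0) (a : ℝ) :
    s * binEntropy (a / s) = negMulLog a + negMulLog (s - a) - negMulLog s := by
  have hsub : 1 - a / s = s⁻¹ * (s - a) := by field_simp
  rw [binEntropy_eq_negMulLog_add_negMulLog_one_sub, hsub, div_eq_inv_mul,
    negMulLog_mul, negMulLog_mul]
  simp only [negMulLog, log_inv]
  field_simp
  ring

variable [Fintype ι]

lemma shannonEntropy_nonneg {p : ι → ℝ} (hp : p ∈ stdSimplex ℝ ι) : 0 ≤ shannonEntropy p :=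
  sum_nonneg fun i _ => negMulLog_nonneg (hp.1 i) <| by
    simpa [hp.2] using single_le_sum (fun j _ => hp.1 j) (mem_univ i)

/-- Grouping all outcomes other than `j`: the unnormalised form of Fano's bound
`H(p) ≤ h(1 - p j) + (1 - p j) log (|ι| - 1)`. -/
lemma sum_negMulLog_le_negMulLog_add_mul_qaryEntropy [DecidableEq ι] {v : ι → ℝ}
    (hv : ∀ i, 0 ≤ v i) (j : ι) :
    ∑ i, negMulLog (v i) ≤ negMulLog (∑ i, v i) +
      (∑ i, v i) * qaryEntropy (Fintype.card ι) (1 - v j / ∑ i, v i) := by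
  set s := ∑ i, v i
  have hrest : ∑ i ∈ univ.erase j, v i = s - v j := sum_erase_eq_sub (mem_univ j)
  have hcard : ((#(univ.erase j) : ℕ) : ℝ) = ((Fintype.card ι - 1 : ℤ) : ℝ) := by
    rw [card_erase_of_mem (mem_univ j), card_univ, Nat.cast_sub (Fintype.card_pos_iff.mpr ⟨j⟩)]
    push_cast; ring
  rcases eq_or_ne s 0 with hs | hs
  · have hv0 : ∀ i, v i = 0 := fun i =>
      (sum_eq_zero_iff_of_nonneg fun i _ => hv i).mp hs i (mem_univ i)
    simp [hv0, hs]
  have hbin : s * binEntropy (1 - v j / s) =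
      negMulLog (s - v j) + negMulLog (v j) - negMulLog s := by
    rw [show 1 - v j / s = (s - v j) / s by field_simp, mul_binEntropy_div hs, sub_sub_cancel]
  calc ∑ i, negMulLog (v i)
      = negMulLog (v j) + ∑ i ∈ univ.erase j, negMulLog (v i) :=
        (add_sum_erase _ _ (mem_univ j)).symm
    _ ≤ negMulLog (v j) +
          (negMulLog (s - v j) + (s - v j) * log ((Fintype.card ι - 1 : ℤ) : ℝ)) := by
      rw [← hrest, ← hcard]
      gcongr
      exact sum_negMulLog_le_negMulLog_sum_add_mul_log_card _ _ fun i _ => hv i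
    _ = negMulLog s + s * qaryEntropy (Fintype.card ι) (1 - v j / s) := by
      rw [qaryEntropy, mul_add, hbin, ← mul_assoc, mul_sub, mul_one, mul_div_cancel₀ _ hs]
      ring

lemma shannonEntropy_le_qaryEntropy [DecidableEq ι] {p : ι → ℝ} (hp : p ∈ stdSimplex ℝ ι)
    (j : ι) : shannonEntropy p ≤ qaryEntropy (Fintype.card ι) (1 - p j) := by
  simpa [shannonEntropy, hp.2] using sum_negMulLog_le_negMulLog_add_mul_qaryEntropy hp.1 j

/-- Fano's inequality: `H(X) ≤ H(Y) + H(X | Y)`, with each `H(X | Y = y)` bounded by grouping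
all `x ≠ y`. -/
lemma shannonEntropy_le_add_qaryEntropy_of_coupling [DecidableEq ι] {w : ι → ι → ℝ}
    (hw : ∀ x y, 0 ≤ w x y) (hw1 : ∑ x, ∑ y, w x y = 1) :
    shannonEntropy (fun x => ∑ y, w x y) ≤
      shannonEntropy (fun y => ∑ x, w x y) + qaryEntropy (Fintype.card ι) (1 - ∑ y, w y y) := by
  set q : ι → ℝ := fun y => ∑ x, w x y
  have hq : q ∈ stdSimplex ℝ ι :=
    ⟨fun y => sum_nonneg fun x _ => hw x y, by rw [← hw1, sum_comm]⟩
  have hdiag_le : ∀ y, w y y ≤ q y := fun y => single_le_sum (fun x _ => hw x y) (mem_univ y)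
  have hdiag : ∀ y, q y * (1 - w y y / q y) = q y - w y y := fun y => by
    rw [mul_sub, mul_one, mul_div_cancel_of_imp' fun h => le_antisymm (h ▸ hdiag_le y) (hw y y)]
  have hmix : ∑ y, q y * qaryEntropy (Fintype.card ι) (1 - w y y / q y) ≤
      qaryEntropy (Fintype.card ι) (1 - ∑ y, w y y) := by
    have hmem : ∀ y ∈ univ, 1 - w y y / q y ∈ Set.Icc (0 : ℝ) 1 := fun y _ => by
      rw [Set.mem_Icc, sub_nonneg, sub_le_self_iff]
      exact ⟨div_le_one_of_le₀ (hdiag_le y) (hq.1 y), div_nonneg (hw y y) (hq.1 y)⟩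
    have := (strictConcaveOn_qaryEntropy (q := Fintype.card ι)).concaveOn.le_map_sum
      (fun y _ => hq.1 y) hq.2 hmem
    simpa only [smul_eq_mul, hdiag, sum_sub_distrib, hq.2] using this
  calc shannonEntropy (fun x => ∑ y, w x y)
      ≤ ∑ x, ∑ y, negMulLog (w x y) :=
        sum_le_sum fun x _ => negMulLog_sum_le_sum_negMulLog _ _ fun y _ => hw x y
    _ = ∑ y, ∑ x, negMulLog (w x y) := sum_comm
    _ ≤ ∑ y, (negMulLog (q y) + q y * qaryEntropy (Fintype.card ι) (1 - w y y / q y)) :=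
        sum_le_sum fun y _ => sum_negMulLog_le_negMulLog_add_mul_qaryEntropy (fun x => hw x y) y
    _ ≤ shannonEntropy q + qaryEntropy (Fintype.card ι) (1 - ∑ y, w y y) := by
        rw [sum_add_distrib]
        exact add_le_add_right hmix _

lemma half_sum_abs_sub_eq_one_sub_sum_min {p q : ι → ℝ} (hp : p ∈ stdSimplex ℝ ι)
    (hq : q ∈ stdSimplex ℝ ι) : (1 / 2) * ∑ i, |p i - q i| = 1 - ∑ i, min (p i) (q i) := by
  have habs : ∀ i, |p i - q i| = p i + q i - 2 * min (p i) (q i) := fun i => by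
    rcases le_total (p i) (q i) with h | h
    · rw [abs_of_nonpos (sub_nonpos.2 h), min_eq_left h]; ring
    · rw [abs_of_nonneg (sub_nonneg.2 h), min_eq_right h]; ring
  simp only [habs, sum_sub_distrib, sum_add_distrib, ← mul_sum, hp.2, hq.2]
  ring

/-- The maximal coupling: it keeps the common mass `min p q` on the diagonal and spreads the
excesses `p - min p q` and `q - min p q` as a product measure. -/
lemma exists_coupling_sum_diag_eq_sum_min [DecidableEq ι] {p q : ι → ℝ}
    (hp : p ∈ stdSimplex ℝ ι) (hq : q ∈ stdSimplex ℝ ι) :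
    ∃ w : ι → ι → ℝ, (∀ x y, 0 ≤ w x y) ∧ (∀ x, ∑ y, w x y = p x) ∧
      (∀ y, ∑ x, w x y = q y) ∧ ∑ y, w y y = ∑ y, min (p y) (q y) := by
  set m : ι → ℝ := fun i => min (p i) (q i)
  set a : ι → ℝ := fun i => p i - m i
  set b : ι → ℝ := fun i => q i - m i
  set δ := 1 - ∑ i, m i
  have ha : ∀ i, 0 ≤ a i := fun i => sub_nonneg.2 (min_le_left _ _)
  have hb : ∀ i, 0 ≤ b i := fun i => sub_nonneg.2 (min_le_right _ _)
  have hsa : ∑ i, a i = δ := by simp only [a, sum_sub_distrib, hp.2, δ]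
  have hsb : ∑ i, b i = δ := by simp only [b, sum_sub_distrib, hq.2, δ]
  have hzero : ∀ {c : ι → ℝ}, (∀ i, 0 ≤ c i) → ∑ i, c i = δ → ∀ i, δ = 0 → c i = 0 :=
    fun hc hsc i hδ =>
      (sum_eq_zero_iff_of_nonneg fun j _ => hc j).mp (hsc.trans hδ) i (mem_univ i)
  refine ⟨fun x y => (if x = y then m x else 0) + a x * b y / δ, fun x y => ?_, fun x => ?_,
    fun y => ?_, ?_⟩
  · have hδ : 0 ≤ δ := hsa ▸ sum_nonneg fun i _ => ha i
    have hdiag : 0 ≤ if x = y then m x else 0 := by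
      split_ifs
      exacts [le_min (hp.1 x) (hq.1 x), le_rfl]
    exact add_nonneg hdiag (div_nonneg (mul_nonneg (ha x) (hb y)) hδ)
  · rw [sum_add_distrib, sum_ite_eq, if_pos (mem_univ x), ← sum_div, ← mul_sum, hsb,
      mul_div_cancel_of_imp (hzero ha hsa x)]
    ring
  · rw [sum_add_distrib, sum_ite_eq', if_pos (mem_univ y), ← sum_div, ← sum_mul, hsa,
      mul_div_cancel_left_of_imp (hzero hb hsb y)]
    ring
  · have hab : ∀ y, a y * b y = 0 := fun y => by
      rcases le_total (p y) (q y) with h | h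
      · simp [a, m, min_eq_left h]
      · simp [b, m, min_eq_right h]
    simp [hab]

theorem shannonEntropy_sub_le_qaryEntropy [DecidableEq ι] {p q : ι → ℝ}
    (hp : p ∈ stdSimplex ℝ ι) (hq : q ∈ stdSimplex ℝ ι) :
    shannonEntropy p - shannonEntropy q ≤
      qaryEntropy (Fintype.card ι) ((1 / 2) * ∑ i, |p i - q i|) := by
  obtain ⟨w, hw, hrow, hcol, hdiag⟩ := exists_coupling_sum_diag_eq_sum_min hp hq
  have hfano := shannonEntropy_le_add_qaryEntropy_of_coupling hw (by simp [hrow, hp.2])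
  rw [funext hrow, funext hcol, hdiag] at hfano
  rw [half_sum_abs_sub_eq_one_sub_sum_min hp hq]
  linarith

lemma exists_half_sum_abs_sub_le_one_sub {p q : ι → ℝ} (hp : p ∈ stdSimplex ℝ ι)
    (hq : q ∈ stdSimplex ℝ ι) : ∃ j, (1 / 2) * ∑ i, |p i - q i| ≤ 1 - p j := by
  obtain ⟨j, hj⟩ : ∃ j, p j ≤ q j := by
    by_contra! h
    have hne : (univ : Finset ι).Nonempty :=
      nonempty_of_sum_ne_zero (hp.2.trans_ne one_ne_zero)
    have := sum_lt_sum_of_nonempty hne fun i _ => h i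
    rw [hp.2, hq.2] at this
    exact this.false
  refine ⟨j, ?_⟩
  rw [half_sum_abs_sub_eq_one_sub_sum_min hp hq, sub_le_sub_iff_left, ← min_eq_left hj]
  exact single_le_sum (f := fun i => min (p i) (q i))
    (fun i _ => le_min (hp.1 i) (hq.1 i)) (mem_univ j)

theorem shannonEntropy_sub_le_qaryEntropy_of_le [DecidableEq ι] (hι : 2 ≤ Fintype.card ι)
    {p q r : ι → ℝ} {ε : ℝ} (hp : p ∈ stdSimplex ℝ ι) (hq : q ∈ stdSimplex ℝ ι)
    (hr : r ∈ stdSimplex ℝ ι) (hpr : shannonEntropy p ≤ shannonEntropy r)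
    (hrq : (1 / 2) * ∑ i, |r i - q i| ≤ ε) (hpε : ∃ j, p j ≤ 1 - ε) :
    shannonEntropy p - shannonEntropy q ≤ qaryEntropy (Fintype.card ι) ε := by
  obtain ⟨j, hj⟩ := hpε
  have hδ : 0 ≤ (1 / 2) * ∑ i, |r i - q i| := by positivity
  rcases le_or_gt ε (1 - 1 / Fintype.card ι) with hε | hε
  · calc shannonEntropy p - shannonEntropy q
        ≤ shannonEntropy r - shannonEntropy q := by linarith
      _ ≤ qaryEntropy (Fintype.card ι) ((1 / 2) * ∑ i, |r i - q i|) :=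
          shannonEntropy_sub_le_qaryEntropy hr hq
      _ ≤ qaryEntropy (Fintype.card ι) ε :=
          (qaryEntropy_strictMonoOn hι).monotoneOn ⟨hδ, hrq.trans hε⟩ ⟨hδ.trans hrq, hε⟩ hrq
  · calc shannonEntropy p - shannonEntropy q
        ≤ shannonEntropy p := by linarith [shannonEntropy_nonneg hq]
      _ ≤ qaryEntropy (Fintype.card ι) (1 - p j) := shannonEntropy_le_qaryEntropy hp j
      _ ≤ qaryEntropy (Fintype.card ι) ε := by
          have hpj : 0 ≤ p j := hp.1 j
          exact (qaryEntropy_strictAntiOn hι).antitoneOn ⟨hε.le, by linarith⟩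
            ⟨by linarith, by linarith⟩ (by linarith)

end Classical

section Stochastic

variable {n : Type*} [Fintype n] [DecidableEq n] {M : Matrix n n ℝ} {x : n → ℝ}

lemma mulVec_mem_stdSimplex (hM : M ∈ colStochastic ℝ n) (hx : x ∈ stdSimplex ℝ n) :
    M *ᵥ x ∈ stdSimplex ℝ n :=
  ⟨nonneg_mulVec_of_mem_colStochastic hM hx.1, (sum_mulVec_of_mem_colStochastic hM).trans hx.2⟩

lemma shannonEntropy_le_shannonEntropy_mulVec (hM : M ∈ doublyStochastic ℝ n)
    (hx : ∀ i, 0 ≤ x i) : shannonEntropy x ≤ shannonEntropy (M *ᵥ x) := by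
  calc shannonEntropy x = ∑ i, (M *ᵥ fun k => negMulLog (x k)) i :=
        (sum_mulVec_of_mem_doublyStochastic hM).symm
    _ ≤ shannonEntropy (M *ᵥ x) := sum_le_sum fun i _ => by
        have := concaveOn_negMulLog.le_map_sum (fun k _ => hM.1 i k)
          (sum_row_of_mem_doublyStochastic hM i) fun k _ => Set.mem_Ici.2 (hx k)
        simpa only [mulVec, dotProduct, smul_eq_mul] using this

lemma sum_abs_mulVec_le (hM : M ∈ colStochastic ℝ n) (x : n → ℝ) :
    ∑ i, |(M *ᵥ x) i| ≤ ∑ i, |x i| := by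
  calc ∑ i, |(M *ᵥ x) i| ≤ ∑ i, (M *ᵥ fun k => |x k|) i := sum_le_sum fun i _ => by
        simp only [mulVec, dotProduct]
        refine (abs_sum_le_sum_abs _ _).trans_eq (sum_congr rfl fun k _ => ?_)
        rw [abs_mul, abs_of_nonneg (hM.1 i k)]
    _ = ∑ i, |x i| := sum_mulVec_of_mem_colStochastic hM

lemma exists_le_mulVec_apply (hM : M ∈ rowStochastic ℝ n) (x : n → ℝ) (i : n) :
    ∃ j, x j ≤ (M *ᵥ x) i := by
  obtain ⟨j, -, hj⟩ := exists_min_image univ x ⟨i, mem_univ i⟩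
  refine ⟨j, ?_⟩
  calc x j = ∑ k, M i k * x j := by rw [← sum_mul, sum_row_of_mem_rowStochastic hM i, one_mul]
    _ ≤ (M *ᵥ x) i := sum_le_sum fun k hk => mul_le_mul_of_nonneg_left (hj k hk) (hM.1 i k)

end Stochastic

section Quantum

variable {n : Type*}

def unistochastic (U : Matrix n n ℂ) : Matrix n n ℝ :=
  Matrix.of fun i j => Complex.normSq (U i j)

lemma unistochastic_one [DecidableEq n] : unistochastic (1 : Matrix n n ℂ) = 1 := by
  ext i j
  by_cases h : i = j <;> simp [unistochastic, one_apply, h]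

variable [Fintype n]

def diagInBasis (V A : Matrix n n ℂ) : n → ℝ :=
  fun i => (star V * A * V) i i |>.re

lemma diagInBasis_sub (V A B : Matrix n n ℂ) :
    diagInBasis V (A - B) = diagInBasis V A - diagInBasis V B := by
  ext i
  simp [diagInBasis, mul_sub, sub_mul]

variable [DecidableEq n]

lemma unistochastic_mem_doublyStochastic {U : Matrix n n ℂ} (hU : U ∈ unitaryGroup n ℂ) :
    unistochastic U ∈ doublyStochastic ℝ n := by
  have hdiag : ∀ {A B : Matrix n n ℂ}, A * B = 1 → ∀ i, ∑ k, A i k * B k i = 1 := fun h i => by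
    simpa [mul_apply] using congrFun (congrFun h i) i
  refine mem_doublyStochastic_iff_sum.2
    ⟨fun i j => Complex.normSq_nonneg _, fun i => ?_, fun j => ?_⟩
  · have := hdiag (mem_unitaryGroup_iff.1 hU) i
    simp only [star_apply, RCLike.star_def, Complex.mul_conj] at this
    exact_mod_cast this
  · have := hdiag (mem_unitaryGroup_iff'.1 hU) j
    simp only [star_apply, RCLike.star_def, mul_comm, Complex.mul_conj] at this
    exact_mod_cast this

lemma unistochastic_star_mul_mem_doublyStochastic (U V : unitaryGroup n ℂ) :
    unistochastic (star (U : Matrix n n ℂ) * (V : Matrix n n ℂ)) ∈ doublyStochastic ℝ n :=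
  unistochastic_mem_doublyStochastic (mul_mem (Unitary.star_mem U.2) V.2)

lemma diagInBasis_conj_diagonal (V W : Matrix n n ℂ) (μ : n → ℝ) :
    diagInBasis V (W * diagonal (RCLike.ofReal ∘ μ) * star W) =
      unistochastic (star V * W) *ᵥ μ := by
  ext i
  set N := star V * W
  have hconj : star V * (W * diagonal (RCLike.ofReal ∘ μ) * star W) * V =
      N * diagonal (RCLike.ofReal ∘ μ) * star N := by
    simp only [N, star_mul, star_star, Matrix.mul_assoc]
  rw [diagInBasis, hconj, mul_apply, Complex.re_sum]
  refine sum_congr rfl fun k _ => ?_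
  rw [mul_diagonal, star_apply, RCLike.star_def, mul_right_comm, Complex.mul_conj]
  simp [unistochastic]

lemma Matrix.IsHermitian.diagInBasis_eq {A : Matrix n n ℂ} (hA : A.IsHermitian)
    (V : Matrix n n ℂ) :
    diagInBasis V A =
      unistochastic (star V * (hA.eigenvectorUnitary : Matrix n n ℂ)) *ᵥ hA.eigenvalues := by
  conv_lhs => rw [hA.spectral_theorem, Unitary.conjStarAlgAut_apply]
  exact diagInBasis_conj_diagonal _ _ _

lemma Matrix.IsHermitian.diagInBasis_eigenvectorUnitary {A : Matrix n n ℂ} (hA : A.IsHermitian) :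
    diagInBasis (hA.eigenvectorUnitary : Matrix n n ℂ) A = hA.eigenvalues := by
  rw [hA.diagInBasis_eq, Unitary.coe_star_mul_self, unistochastic_one, one_mulVec]

lemma Matrix.PosSemidef.eigenvalues_mem_stdSimplex {A : Matrix n n ℂ} (hA : A.PosSemidef)
    (htr : A.trace = 1) : hA.isHermitian.eigenvalues ∈ stdSimplex ℝ n := by
  refine ⟨hA.eigenvalues_nonneg, ?_⟩
  have := hA.isHermitian.trace_eq_sum_eigenvalues
  rw [htr] at this
  exact_mod_cast (by simpa using this.symm : ((∑ i, hA.isHermitian.eigenvalues i : ℝ) : ℂ) = 1)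

lemma Matrix.PosSemidef.diagInBasis_mem_stdSimplex {A : Matrix n n ℂ} (hA : A.PosSemidef)
    (htr : A.trace = 1) (V : unitaryGroup n ℂ) :
    diagInBasis (V : Matrix n n ℂ) A ∈ stdSimplex ℝ n := by
  rw [hA.isHermitian.diagInBasis_eq]
  exact mulVec_mem_stdSimplex
    (mem_doublyStochastic_iff_mem_rowStochastic_and_mem_colStochastic.1
      (unistochastic_star_mul_mem_doublyStochastic V hA.isHermitian.eigenvectorUnitary)).2
    (hA.eigenvalues_mem_stdSimplex htr)

variable {ρ σ : Matrix n n ℂ} (hρ : ρ.PosSemidef) (hσ : σ.PosSemidef)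
  (hρtr : ρ.trace = 1) (hσtr : σ.trace = 1)
  (W : unitaryGroup n ℂ) (μ : n → ℝ)
  (hW : ρ - σ = (W : Matrix n n ℂ) * diagonal (RCLike.ofReal ∘ μ) * star (W : Matrix n n ℂ))
include hρ hσ hρtr hσtr hW

lemma exists_eigenvalues_le_one_sub :
    ∃ j, hρ.isHermitian.eigenvalues j ≤ 1 - (1 / 2) * ∑ i, |μ i| := by
  have hμ : diagInBasis (W : Matrix n n ℂ) ρ - diagInBasis W σ = μ := by
    rw [← diagInBasis_sub, hW, diagInBasis_conj_diagonal, Unitary.coe_star_mul_self,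
      unistochastic_one, one_mulVec]
  obtain ⟨j, hj⟩ := exists_half_sum_abs_sub_le_one_sub (hρ.diagInBasis_mem_stdSimplex hρtr W)
    (hσ.diagInBasis_mem_stdSimplex hσtr W)
  obtain ⟨k, hk⟩ := exists_le_mulVec_apply
    (mem_doublyStochastic_iff_mem_rowStochastic_and_mem_colStochastic.1
      (unistochastic_star_mul_mem_doublyStochastic W hρ.isHermitian.eigenvectorUnitary)).1
    hρ.isHermitian.eigenvalues j
  rw [← hρ.isHermitian.diagInBasis_eq] at hk
  simp only [← hμ, Pi.sub_apply] at hj ⊢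
  exact ⟨k, by linarith⟩

theorem shannonEntropy_eigenvalues_sub_le (hn : 2 ≤ Fintype.card n) :
    shannonEntropy hρ.isHermitian.eigenvalues - shannonEntropy hσ.isHermitian.eigenvalues ≤
      qaryEntropy (Fintype.card n) ((1 / 2) * ∑ i, |μ i|) := by
  set Uσ := hσ.isHermitian.eigenvectorUnitary
  have hr : diagInBasis Uσ ρ = unistochastic
      (star (Uσ : Matrix n n ℂ) * (hρ.isHermitian.eigenvectorUnitary : Matrix n n ℂ)) *ᵥ
        hρ.isHermitian.eigenvalues :=
    hρ.isHermitian.diagInBasis_eq _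
  have hrσ : diagInBasis Uσ ρ - hσ.isHermitian.eigenvalues =
      unistochastic (star (Uσ : Matrix n n ℂ) * (W : Matrix n n ℂ)) *ᵥ μ := by
    rw [← hσ.isHermitian.diagInBasis_eigenvectorUnitary, ← diagInBasis_sub, hW,
      diagInBasis_conj_diagonal]
  refine shannonEntropy_sub_le_qaryEntropy_of_le hn (hρ.eigenvalues_mem_stdSimplex hρtr)
    (hσ.eigenvalues_mem_stdSimplex hσtr) (hρ.diagInBasis_mem_stdSimplex hρtr Uσ) ?_ ?_
    (exists_eigenvalues_le_one_sub hρ hσ hρtr hσtr W μ hW)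
  · rw [hr]
    exact shannonEntropy_le_shannonEntropy_mulVec
      (unistochastic_star_mul_mem_doublyStochastic _ _) hρ.eigenvalues_nonneg
  · have := sum_abs_mulVec_le
      (mem_doublyStochastic_iff_mem_rowStochastic_and_mem_colStochastic.1
        (unistochastic_star_mul_mem_doublyStochastic Uσ W)).2 μ
    rw [← hrσ] at this
    simp only [Pi.sub_apply] at this
    linarith

end Quantum

lemma neg_sum_mul_logb_eq_shannonEntropy_div {ι : Type*} [Fintype ι] (p : ι → ℝ) (b : ℝ) :
    -∑ i, p i * logb b (p i) = shannonEntropy p / log b := by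
  rw [shannonEntropy, sum_div, ← sum_neg_distrib]
  refine sum_congr rfl fun i _ => ?_
  rw [logb, negMulLog]
  ring

lemma qaryEntropy_div_log (q : ℕ) (ε b : ℝ) :
    qaryEntropy q ε / log b =
      (-ε * logb b ε - (1 - ε) * logb b (1 - ε)) + ε * logb b ((q : ℝ) - 1) := by
  simp only [qaryEntropy, binEntropy, logb, log_inv, Int.cast_sub, Int.cast_natCast, Int.cast_one]
  ring

theorem audenaert_vonNeumann_bound (d : ℕ) (hd : 2 ≤ d)
    (ρ σ : Matrix (Fin d) (Fin d) ℂ)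
    (hρ : ρ.PosSemidef) (hσ : σ.PosSemidef)
    (hρtr : ρ.trace = 1) (hσtr : σ.trace = 1)
    (ε : ℝ)
    (hε : ε = (1/2) * ∑ i, |(hρ.isHermitian.sub hσ.isHermitian).eigenvalues i|) :
    |(-∑ i, hρ.isHermitian.eigenvalues i * Real.logb 2 (hρ.isHermitian.eigenvalues i)) -
      (-∑ i, hσ.isHermitian.eigenvalues i * Real.logb 2 (hσ.isHermitian.eigenvalues i))| ≤
      (-ε * Real.logb 2 ε - (1 - ε) * Real.logb 2 (1 - ε)) + ε * Real.logb 2 ((d : ℝ) - 1) := by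
  set W := (hρ.isHermitian.sub hσ.isHermitian).eigenvectorUnitary
  set μ := (hρ.isHermitian.sub hσ.isHermitian).eigenvalues
  set W' : Matrix (Fin d) (Fin d) ℂ := ↑W
  have hW : ρ - σ = W' * diagonal (RCLike.ofReal ∘ μ) * star W' :=
    (hρ.isHermitian.sub hσ.isHermitian).spectral_theorem
  have hW_neg : σ - ρ = W' * diagonal (RCLike.ofReal ∘ (-μ)) * star W' := by
    have hneg : RCLike.ofReal ∘ (-μ) = fun i => -(RCLike.ofReal ∘ μ : Fin d → ℂ) i := by
      ext; simp
    rw [← neg_sub, hW, hneg, ← diagonal_neg, Matrix.mul_neg, Matrix.neg_mul]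
  have hn : 2 ≤ Fintype.card (Fin d) := by simpa using hd
  have h₁ := shannonEntropy_eigenvalues_sub_le hρ hσ hρtr hσtr W μ hW hn
  have h₂ := shannonEntropy_eigenvalues_sub_le hσ hρ hσtr hρtr W (-μ) hW_neg hn
  simp only [Fintype.card_fin, Pi.neg_apply, abs_neg, ← hε] at h₁ h₂
  rw [neg_sum_mul_logb_eq_shannonEntropy_div, neg_sum_mul_logb_eq_shannonEntropy_div,
    ← qaryEntropy_div_log, ← sub_div, abs_div, abs_of_pos (log_pos one_lt_two)]
  exact div_le_div_of_nonneg_right (abs_sub_le_iff.2 ⟨h₁, h₂⟩) (log_nonneg one_le_two)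
end
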